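/- arXiv:1801.09980 — 10 statements merged into one kernel-verified Lean document; each statement's English description precedes it below -/
import Mathlib

section
/- In ℓ∞², the pair ((1,1), (1,1)) is not a CPP: for every r > 0 and μ > 0 there exist a unit vector z Birkhoff-James orthogonal to (1,1), a unit vector w Birkhoff-James orthogonal to (1,1), and scalars a, b with a·(1,1) + b·z ∈ B((1,1), r) ∩ S, but ‖a·(1,1) + bμ·w‖ > 1. -/
/-!
The point `x = (1, 1)` is a corner of the unit ball of `ℓ∞²`, so both `z = (1, 0)` and
`w = (0, -1)` are Birkhoff-James orthogonal to it: each leaves a coordinate of `x` of modulus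
`‖x‖` untouched. Moving from `x` along `-z` keeps the second coordinate at `1`, so
`x - e z` stays on the unit sphere for small `e > 0`; the corresponding point `x - e μ w`
has second coordinate `1 + e μ > 1`, however small `μ > 0` is.
-/

open Metric

/-- Birkhoff-James orthogonality: `x ⊥_B y` iff `‖x + t y‖ ≥ ‖x‖` for all real `t`. -/
def BJOrth {X : Type*} [NormedAddCommGroup X] [NormedSpace ℝ X] (x y : X) : Prop :=
  ∀ t : ℝ, ‖x‖ ≤ ‖x + t • y‖

/-- `(x, y)` is a compatible point pair with constant `(r, μ)`. -/
def IsCPPConst {X Y : Type*} [NormedAddCommGroup X] [NormedSpace ℝ X]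
    [NormedAddCommGroup Y] [NormedSpace ℝ Y] (x : X) (y : Y) (r μ : ℝ) : Prop :=
  ∀ z : X, ‖z‖ = 1 → BJOrth x z → ∀ w : Y, ‖w‖ = 1 → BJOrth y w →
    ∀ a b : ℝ, ‖a • x + b • z - x‖ ≤ r → ‖a • x + b • z‖ = 1 →
      ‖a • y + (b * μ) • w‖ ≤ 1

/-- `(x, y)` is a compatible point pair (CPP). -/
def IsCPP {X Y : Type*} [NormedAddCommGroup X] [NormedSpace ℝ X]
    [NormedAddCommGroup Y] [NormedSpace ℝ Y] (x : X) (y : Y) : Prop :=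
  ∃ r > 0, ∃ μ > 0, IsCPPConst x y r μ

/-- `(x, y)` is a weakly compatible point pair (weak CPP). -/
def IsWeakCPP {X Y : Type*} [NormedAddCommGroup X] [NormedSpace ℝ X]
    [NormedAddCommGroup Y] [NormedSpace ℝ Y] (x : X) (y : Y) : Prop :=
  ∃ z : X, ‖z‖ = 1 ∧ BJOrth x z ∧ ∃ w : Y, ‖w‖ = 1 ∧ BJOrth y w ∧
    ∃ r > 0, ∃ μ > 0, ∀ a b : ℝ, ‖a • x + b • z - x‖ ≤ r → ‖a • x + b • z‖ = 1 →
      ‖a • y + (b * μ) • w‖ ≤ 1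

/-- A normed space is smooth if every unit vector has a unique supporting functional. -/
def SmoothSp (X : Type*) [NormedAddCommGroup X] [NormedSpace ℝ X] : Prop :=
  ∀ x : X, ‖x‖ = 1 → ∃! f : X →L[ℝ] ℝ, ‖f‖ = 1 ∧ f x = 1

noncomputable abbrev Linf2 := PiLp ⊤ (fun _ : Fin 2 => ℝ)

lemma bjOrth_of_norm_eq_norm_apply {p : ENNReal} [Fact (1 ≤ p)] {ι : Type*} [Fintype ι]
    {β : ι → Type*} [∀ i, NormedAddCommGroup (β i)] [∀ i, NormedSpace ℝ (β i)]
    {x z : PiLp p β} {i : ι} (hx : ‖x‖ = ‖x i‖) (hz : z i = 0) : BJOrth x z := by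
  intro t
  calc ‖x‖ = ‖(x + t • z) i‖ := by simp [hx, hz]
    _ ≤ ‖x + t • z‖ := PiLp.norm_apply_le _ i

lemma Linf2.norm_eq_max (x : Linf2) : ‖x‖ = max |x 0| |x 1| := by
  refine le_antisymm ?_ (max_le (PiLp.norm_apply_le x 0) (PiLp.norm_apply_le x 1))
  rw [PiLp.norm_eq_ciSup]
  exact ciSup_le fun i => by fin_cases i <;> simp

theorem stmt2 :
    ∀ r : ℝ, 0 < r → ∀ μ : ℝ, 0 < μ →
      ∃ z : Linf2, ‖z‖ = 1 ∧ BJOrth ((WithLp.equiv ⊤ (Fin 2 → ℝ)).symm ![1, 1]) z ∧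
      ∃ w : Linf2, ‖w‖ = 1 ∧ BJOrth ((WithLp.equiv ⊤ (Fin 2 → ℝ)).symm ![1, 1]) w ∧
      ∃ a b : ℝ,
        ‖a • ((WithLp.equiv ⊤ (Fin 2 → ℝ)).symm ![1, 1] : Linf2) + b • z -
          (WithLp.equiv ⊤ (Fin 2 → ℝ)).symm ![1, 1]‖ ≤ r ∧
        ‖a • ((WithLp.equiv ⊤ (Fin 2 → ℝ)).symm ![1, 1] : Linf2) + b • z‖ = 1 ∧
        1 < ‖a • ((WithLp.equiv ⊤ (Fin 2 → ℝ)).symm ![1, 1] : Linf2) + (b * μ) • w‖ := by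
  intro r hr μ hμ
  set e := min r 1
  have he : 0 < e := lt_min hr one_pos
  have her : e ≤ r := min_le_left r 1
  have he1 : e ≤ 1 := min_le_right r 1
  have hx : ‖((WithLp.equiv ⊤ (Fin 2 → ℝ)).symm ![1, 1] : Linf2)‖ = 1 := by
    rw [Linf2.norm_eq_max]; simp
  refine ⟨(WithLp.equiv ⊤ (Fin 2 → ℝ)).symm ![1, 0], by (rw [Linf2.norm_eq_max]; simp),
    bjOrth_of_norm_eq_norm_apply (i := 1) (by simpa using hx) (by simp),
    (WithLp.equiv ⊤ (Fin 2 → ℝ)).symm ![0, -1], by (rw [Linf2.norm_eq_max]; simp),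
    bjOrth_of_norm_eq_norm_apply (i := 0) (by simpa using hx) (by simp),
    1, -e, ?_, ?_, ?_⟩
  · rw [Linf2.norm_eq_max]; simp [abs_of_pos he, her, hr.le]
  · rw [Linf2.norm_eq_max]; simp [abs_le]; constructor <;> linarith
  · rw [Linf2.norm_eq_max]; simp
    exact (lt_add_of_pos_right 1 (mul_pos he hμ)).trans_le (le_abs_self _)
end

section
/- Let X, Y be smooth real Banach spaces and T : X → Y a bounded linear operator with ‖T‖ = 1 and rank T > 1. If x is a unit vector with ‖Tx‖ = 1, then (x, Tx) is a weak CPP: there exist a unit vector z with x ⊥_B z, a unit vector w with Tx ⊥_B w, and constants r > 0, μ > 0 such that ax + bz ∈ B(x, r) ∩ S_X implies ‖a·Tx + bμw‖ ≤ 1. -/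
/-!
Take a norming functional `g` of `T x`. Since `‖T‖ ≤ 1`, `g ∘ T` norms `x`, and any vector in
the kernel of a norming functional is Birkhoff-James orthogonal to the normed vector. As the range
of `T` has rank `> 1`, there is `u` with `T u ∉ ℝ ∙ T x`, and `z = u - g (T u) • x` lies in the
kernel of `g ∘ T` with `T z ≠ 0`; then `x ⊥_B z` and `T x ⊥_B T z`. After normalizing `z`, the
choice `w = T z / ‖T z‖`, `μ = ‖T z‖` gives `a • T x + (b * μ) • w = T (a • x + b • z)`, whose norm
is at most `‖a • x + b • z‖`.
-/

open Metric

section BirkhoffJames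

variable {E : Type*} [NormedAddCommGroup E] [NormedSpace ℝ E]

theorem bjOrth_of_norming_functional {f : StrongDual ℝ E} {x y : E} (hf : ‖f‖ ≤ 1)
    (hfx : f x = ‖x‖) (hfy : f y = 0) : BJOrth x y := fun t =>
  calc ‖x‖ = f (x + t • y) := by simp [hfx, hfy]
    _ ≤ ‖f (x + t • y)‖ := Real.le_norm_self _
    _ ≤ ‖f‖ * ‖x + t • y‖ := f.le_opNorm _
    _ ≤ ‖x + t • y‖ := mul_le_of_le_one_left (norm_nonneg _) hf

theorem BJOrth.smul_right {x y : E} (h : BJOrth x y) (c : ℝ) : BJOrth x (c • y) := fun t => by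
  simpa only [smul_smul] using h (t * c)

end BirkhoffJames

theorem LinearMap.exists_apply_notMem_span_singleton {K M N : Type*} [DivisionRing K]
    [AddCommGroup M] [Module K M] [AddCommGroup N] [Module K N] (f : M →ₗ[K] N)
    (hf : 1 < Module.rank K (LinearMap.range f)) (y : N) : ∃ u, f u ∉ K ∙ y := by
  by_contra! h
  have hle : LinearMap.range f ≤ K ∙ y := by
    rintro _ ⟨u, rfl⟩
    exact h u
  have := (Submodule.rank_mono hle).trans (by simpa using rank_span_le ({y} : Set N))
  exact hf.not_ge this

section Operator

variable {X Y : Type*} [NormedAddCommGroup X] [NormedSpace ℝ X]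
  [NormedAddCommGroup Y] [NormedSpace ℝ Y]

theorem exists_bjOrth_apply_bjOrth {T : X →L[ℝ] Y} (hT : ‖T‖ ≤ 1)
    (hrank : 1 < Module.rank ℝ (LinearMap.range (T : X →ₗ[ℝ] Y)))
    {x : X} (hx : ‖x‖ = 1) (hTx : ‖T x‖ = 1) :
    ∃ z, T z ≠ 0 ∧ BJOrth x z ∧ BJOrth (T x) (T z) := by
  obtain ⟨g, hg, hgTx⟩ := exists_dual_vector'' ℝ (T x)
  obtain ⟨u, hu⟩ := (T : X →ₗ[ℝ] Y).exists_apply_notMem_span_singleton hrank (T x)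
  have hgT : ‖g.comp T‖ ≤ 1 :=
    (g.opNorm_comp_le T).trans (mul_le_one₀ hg (norm_nonneg _) hT)
  have hTz : T (u - g (T u) • x) = T u - g (T u) • T x := by simp
  have hgTz : g (T (u - g (T u) • x)) = 0 := by simp [hgTx, hTx]
  refine ⟨u - g (T u) • x, ?_, ?_, ?_⟩
  · rw [hTz, sub_ne_zero]
    intro h
    exact hu (h ▸ Submodule.smul_mem _ _ (Submodule.mem_span_singleton_self _))
  · exact bjOrth_of_norming_functional hgT (by simp [hgTx, hTx, hx]) hgTz
  · exact bjOrth_of_norming_functional hg hgTx hgTz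

theorem isWeakCPP_of_bjOrth_apply_bjOrth {T : X →L[ℝ] Y} (hT : ‖T‖ ≤ 1) {x z : X}
    (hTz : T z ≠ 0) (hxz : BJOrth x z) (hTxz : BJOrth (T x) (T z)) : IsWeakCPP x (T x) := by
  have hz : z ≠ 0 := fun h => hTz (by rw [h, map_zero])
  set z₁ : X := ‖z‖⁻¹ • z
  have hTz₁ : T z₁ ≠ 0 := by
    simpa [z₁] using ⟨hz, hTz⟩
  refine ⟨z₁, norm_smul_inv_norm hz, hxz.smul_right _, ‖T z₁‖⁻¹ • T z₁,
    norm_smul_inv_norm hTz₁, ?_, 1, one_pos, ‖T z₁‖, norm_pos_iff.mpr hTz₁, ?_⟩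
  · simpa [z₁, smul_smul] using hTxz.smul_right (‖T z₁‖⁻¹ * ‖z‖⁻¹)
  · intro a b _ hab
    have hmap : a • T x + (b * ‖T z₁‖) • ‖T z₁‖⁻¹ • T z₁ = T (a • x + b • z₁) := by
      rw [smul_smul, mul_assoc, mul_inv_cancel₀ (norm_ne_zero_iff.mpr hTz₁), mul_one]
      simp
    rw [hmap]
    calc ‖T (a • x + b • z₁)‖ ≤ ‖T‖ * ‖a • x + b • z₁‖ := T.le_opNorm _
      _ ≤ 1 := by rw [hab, mul_one]; exact hT

end Operator

theorem stmt5_general {X Y : Type*} [NormedAddCommGroup X] [NormedSpace ℝ X]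
    [NormedAddCommGroup Y] [NormedSpace ℝ Y]
    (T : X →L[ℝ] Y) (hT : ‖T‖ = 1)
    (hrank : 1 < Module.rank ℝ (LinearMap.range (T : X →ₗ[ℝ] Y)))
    (x : X) (hx : ‖x‖ = 1) (hTx : ‖T x‖ = 1) :
    IsWeakCPP x (T x) := by
  obtain ⟨z, hTz, hxz, hTxz⟩ := exists_bjOrth_apply_bjOrth hT.le hrank hx hTx
  exact isWeakCPP_of_bjOrth_apply_bjOrth hT.le hTz hxz hTxz

theorem stmt5 {X Y : Type*} [NormedAddCommGroup X] [NormedSpace ℝ X] [CompleteSpace X]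
    [NormedAddCommGroup Y] [NormedSpace ℝ Y] [CompleteSpace Y]
    (hX : SmoothSp X) (hY : SmoothSp Y) (T : X →L[ℝ] Y) (hT : ‖T‖ = 1)
    (hrank : 1 < Module.rank ℝ (LinearMap.range (T : X →ₗ[ℝ] Y)))
    (x : X) (hx : ‖x‖ = 1) (hTx : ‖T x‖ = 1) :
    IsWeakCPP x (T x) :=
  stmt5_general T hT hrank x hx hTx
end

section
/- Let X be a finite-dimensional smooth real Banach space with dim X ≥ 2. Then there exist unit vectors x, y ∈ S_X with y ≠ ±x such that (x, y) is a weak CPP. -/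
/-!
Let `T` be a quarter turn in a coordinate plane that halves the other basis vectors. Then
`(2T - 1)(T² + 1) = 0`, so `T` is injective and its only possible real eigenvalue is `1/2`, while
`T² = -1` on the plane forces `‖T‖ ≥ 1`. By compactness `T` attains its norm at a unit vector `x`,
and `y = Tx / ‖T‖` cannot be `±x`.

If `g` supports `Tx`, then `f = g ∘ T / ‖T‖` supports `x`. A unit vector `z ∈ ker f` is then
Birkhoff-James orthogonal to `x`, and `w = Tz / ‖Tz‖ ∈ ker g` to `y`. With `μ = ‖Tz‖ / ‖T‖`,
`a y + b μ w = T(a x + b z) / ‖T‖` has norm at most `‖a x + b z‖`.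
-/

open Metric

section Cubic

variable {V : Type*} [AddCommGroup V] [Module ℝ V]

namespace Module.Basis

variable {ι : Type*} [DecidableEq ι] (b : Module.Basis ι ℝ V) {i j : ι}

noncomputable def quarterTurnHalf (i j : ι) : V →ₗ[ℝ] V :=
  b.constr ℝ fun k => if k = i then b j else if k = j then -b i else (2 : ℝ)⁻¹ • b k

theorem quarterTurnHalf_apply_apply_self (hij : i ≠ j) :
    b.quarterTurnHalf i j (b.quarterTurnHalf i j (b i)) = -b i := by
  simp [quarterTurnHalf, constr_basis, hij.symm]

theorem quarterTurnHalf_cubic (hij : i ≠ j) :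
    (2 : ℝ) • b.quarterTurnHalf i j ^ 3 - b.quarterTurnHalf i j ^ 2 +
      (2 : ℝ) • b.quarterTurnHalf i j = 1 := by
  have hT : ∀ k, b.quarterTurnHalf i j (b k) =
      if k = i then b j else if k = j then -b i else (2 : ℝ)⁻¹ • b k :=
    fun k => constr_basis _ _ _ _
  refine b.ext fun k => ?_
  rcases eq_or_ne k i with rfl | hki
  · simp [pow_succ, hT, hij.symm]
  rcases eq_or_ne k j with rfl | hkj
  · simp [pow_succ, hT, hij.symm]
  · simp [pow_succ, hT, hki, hkj]

end Module.Basis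

namespace Module.End

variable {T : Module.End ℝ V}

theorem injective_of_cubic (hT : (2 : ℝ) • T ^ 3 - T ^ 2 + (2 : ℝ) • T = 1) :
    Function.Injective T := by
  refine (injective_iff_map_eq_zero T).2 fun v hv => ?_
  simpa [pow_succ, hv] using (LinearMap.congr_fun hT v).symm

theorem eq_inv_two_of_cubic (hT : (2 : ℝ) • T ^ 3 - T ^ 2 + (2 : ℝ) • T = 1)
    {d : ℝ} {v : V} (hv0 : v ≠ 0) (hv : T v = d • v) : d = 2⁻¹ := by
  have h := LinearMap.congr_fun hT v
  simp only [LinearMap.add_apply, LinearMap.sub_apply, LinearMap.smul_apply, pow_succ, pow_zero,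
    one_mul, Module.End.mul_apply, Module.End.one_apply, hv, map_smul] at h
  have h' : ((2 * d - 1) * (d ^ 2 + 1)) • v = 0 := by
    linear_combination (norm := module) h
  rcases smul_eq_zero.1 h' with hd | hd
  · nlinarith [sq_nonneg d]
  · exact absurd hd hv0

end Module.End

end Cubic

section Normed

variable {X Y : Type*} [NormedAddCommGroup X] [NormedSpace ℝ X]
  [NormedAddCommGroup Y] [NormedSpace ℝ Y]

theorem bjOrth_of_opNorm_le_one {f : X →L[ℝ] ℝ} (hf : ‖f‖ ≤ 1) {x z : X} (hfx : f x = ‖x‖)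
    (hfz : f z = 0) : BJOrth x z := fun t =>
  calc ‖x‖ = f (x + t • z) := by simp [hfx, hfz]
    _ ≤ ‖f‖ * ‖x + t • z‖ := (Real.le_norm_self _).trans (f.le_opNorm _)
    _ ≤ ‖x + t • z‖ := mul_le_of_le_one_left (norm_nonneg _) hf

theorem exists_norm_eq_one_apply_eq_zero [FiniteDimensional ℝ X]
    (hdim : 2 ≤ Module.finrank ℝ X) (f : X →L[ℝ] ℝ) : ∃ z : X, ‖z‖ = 1 ∧ f z = 0 := by
  have hrange : Module.finrank ℝ (LinearMap.range (f : X →ₗ[ℝ] ℝ)) ≤ 1 :=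
    (Submodule.finrank_le _).trans (Module.finrank_self ℝ).le
  have hker : 0 < Module.finrank ℝ (LinearMap.ker (f : X →ₗ[ℝ] ℝ)) := by
    have := LinearMap.finrank_range_add_finrank_ker (f : X →ₗ[ℝ] ℝ)
    omega
  obtain ⟨⟨z, hz⟩, hne⟩ := Module.finrank_pos_iff_exists_ne_zero.1 hker
  have hz0 : z ≠ 0 := by simpa using hne
  exact ⟨‖z‖⁻¹ • z, norm_smul_inv_norm hz0, by rw [map_smul, show f z = 0 from hz, smul_zero]⟩

theorem ContinuousLinearMap.exists_norm_eq_one_norm_apply_eq_opNorm [FiniteDimensional ℝ X]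
    [Nontrivial X] (T : X →L[ℝ] Y) : ∃ x : X, ‖x‖ = 1 ∧ ‖T x‖ = ‖T‖ := by
  obtain ⟨x, hx, hTx⟩ := ((isCompact_sphere (0 : X) 1).image (by fun_prop)).sSup_mem
    ((NormedSpace.sphere_nonempty.2 zero_le_one).image fun x => ‖T x‖)
  exact ⟨x, mem_sphere_zero_iff_norm.1 hx, hTx.trans T.sSup_sphere_eq_norm⟩

theorem ContinuousLinearMap.one_le_opNorm_of_apply_apply_eq_neg (T : X →L[ℝ] X) {v : X}
    (hv0 : v ≠ 0) (hv : T (T v) = -v) : 1 ≤ ‖T‖ := by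
  have hv' : 0 < ‖v‖ := norm_pos_iff.2 hv0
  have hvv : ‖v‖ ≤ ‖T‖ * (‖T‖ * ‖v‖) :=
    calc ‖v‖ = ‖T (T v)‖ := by rw [hv, norm_neg]
      _ ≤ ‖T‖ * ‖T v‖ := T.le_opNorm _
      _ ≤ ‖T‖ * (‖T‖ * ‖v‖) := by gcongr; exact T.le_opNorm _
  have h1 : 1 ≤ ‖T‖ * ‖T‖ := le_of_mul_le_mul_right (by rw [one_mul, mul_assoc]; exact hvv) hv'
  nlinarith [norm_nonneg T]

theorem isWeakCPP_of_norm_apply_eq_opNorm [FiniteDimensional ℝ X]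
    (hdim : 2 ≤ Module.finrank ℝ X) {T : X →L[ℝ] Y} (hT : Function.Injective T) {x : X}
    (hx : ‖x‖ = 1) (hTx : ‖T x‖ = ‖T‖) : IsWeakCPP x (‖T‖⁻¹ • T x) := by
  set c := ‖T‖
  have hx0 : x ≠ 0 := by rintro rfl; simp at hx
  have hc : 0 < c := hTx ▸ norm_pos_iff.2 ((map_ne_zero_iff T hT).2 hx0)
  obtain ⟨g, hg, hgTx⟩ := exists_dual_vector ℝ (T x) (hTx ▸ hc.ne')
  let f : X →L[ℝ] ℝ := c⁻¹ • g.comp T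
  have hf : ‖f‖ ≤ 1 :=
    calc ‖f‖ ≤ c⁻¹ * (‖g‖ * c) := by
          rw [norm_smul, norm_inv, Real.norm_of_nonneg hc.le]
          gcongr
          exact g.opNorm_comp_le T
      _ = 1 := by rw [hg, one_mul, inv_mul_cancel₀ hc.ne']
  have hfx : f x = ‖x‖ := by
    simp [f, hgTx, hTx, hx, inv_mul_cancel₀ hc.ne']
  obtain ⟨z, hz, hfz⟩ := exists_norm_eq_one_apply_eq_zero hdim f
  have hgTz : g (T z) = 0 := by simpa [f, hc.ne'] using hfz
  have hTz : T z ≠ 0 := (map_ne_zero_iff T hT).2 (by rintro rfl; simp at hz)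
  refine ⟨z, hz, bjOrth_of_opNorm_le_one hf hfx hfz, ‖T z‖⁻¹ • T z, norm_smul_inv_norm hTz,
    bjOrth_of_opNorm_le_one hg.le ?_ ?_, 1, one_pos, c⁻¹ * ‖T z‖, by positivity,
    fun a b _ hab => ?_⟩
  · rw [map_smul, hgTx, norm_smul, norm_inv, norm_norm, hTx]
    rfl
  · simp [hgTz]
  have hcomb : a • (c⁻¹ • T x) + (b * (c⁻¹ * ‖T z‖)) • (‖T z‖⁻¹ • T z) =
      c⁻¹ • T (a • x + b • z) := by
    rw [map_add, map_smul, map_smul, smul_add, smul_smul, smul_smul, smul_smul, smul_smul]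
    have : ‖T z‖ ≠ 0 := norm_ne_zero_iff.2 hTz
    congr 2 <;> field_simp
  calc ‖a • (c⁻¹ • T x) + (b * (c⁻¹ * ‖T z‖)) • (‖T z‖⁻¹ • T z)‖
        = c⁻¹ * ‖T (a • x + b • z)‖ := by
          rw [hcomb, norm_smul, norm_inv, Real.norm_of_nonneg hc.le]
    _ ≤ c⁻¹ * (c * ‖a • x + b • z‖) := by gcongr; exact T.le_opNorm _
    _ = 1 := by rw [hab, mul_one, inv_mul_cancel₀ hc.ne']

theorem inv_opNorm_smul_apply_ne_smul {T : X →L[ℝ] X} (hT : 1 ≤ ‖T‖) {x : X}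
    (hx : ∀ d : ℝ, T x = d • x → |d| < 1) {s : ℝ} (hs : |s| = 1) : ‖T‖⁻¹ • T x ≠ s • x := by
  intro h
  have hTx : T x = (‖T‖ * s) • x := by
    rw [mul_smul, ← h, smul_inv_smul₀ (by positivity)]
  have := hx _ hTx
  rw [abs_mul, hs, mul_one, abs_norm] at this
  linarith

end Normed

theorem stmt6_general {X : Type*} [NormedAddCommGroup X] [NormedSpace ℝ X]
    [FiniteDimensional ℝ X] (hdim : 2 ≤ Module.finrank ℝ X) :
    ∃ x y : X, ‖x‖ = 1 ∧ ‖y‖ = 1 ∧ y ≠ x ∧ y ≠ -x ∧ IsWeakCPP x y := by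
  have : Nontrivial X := Module.nontrivial_of_finrank_pos (R := ℝ) (by omega)
  obtain ⟨i, j, hij⟩ := (Fin.nontrivial_iff_two_le.2 hdim).exists_pair_ne
  let b := Module.finBasis ℝ X
  have hcubic := b.quarterTurnHalf_cubic hij
  let T : X →L[ℝ] X := LinearMap.toContinuousLinearMap (b.quarterTurnHalf i j)
  have hT : 1 ≤ ‖T‖ :=
    T.one_le_opNorm_of_apply_apply_eq_neg (b.ne_zero i) (b.quarterTurnHalf_apply_apply_self hij)
  obtain ⟨x, hx, hTx⟩ := T.exists_norm_eq_one_norm_apply_eq_opNorm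
  have hx0 : x ≠ 0 := by rintro rfl; simp at hx
  have heig : ∀ d : ℝ, T x = d • x → |d| < 1 := fun d hd => by
    rw [Module.End.eq_inv_two_of_cubic hcubic hx0 hd]
    norm_num
  refine ⟨x, ‖T‖⁻¹ • T x, hx, ?_, ?_, ?_, ?_⟩
  · rw [norm_smul, norm_inv, norm_norm, hTx, inv_mul_cancel₀ (by positivity)]
  · simpa using inv_opNorm_smul_apply_ne_smul hT heig (s := 1) (by simp)
  · simpa using inv_opNorm_smul_apply_ne_smul hT heig (s := -1) (by simp)
  · have hinj : Function.Injective T := by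
      simpa only [T, LinearMap.coe_toContinuousLinearMap'] using Module.End.injective_of_cubic hcubic
    exact isWeakCPP_of_norm_apply_eq_opNorm hdim hinj hx hTx

theorem stmt6 {X : Type*} [NormedAddCommGroup X] [NormedSpace ℝ X]
    [FiniteDimensional ℝ X] (hdim : 2 ≤ Module.finrank ℝ X) (hX : SmoothSp X) :
    ∃ x y : X, ‖x‖ = 1 ∧ ‖y‖ = 1 ∧ y ≠ x ∧ y ≠ -x ∧ IsWeakCPP x y :=
  stmt6_general hdim
end

section
/- Let X be a smooth real Banach space and Y a strictly convex and smooth real Banach space. Let T : X → Y be a linear operator with rank T = 1 and ‖T‖ = 1, and suppose x is a unit vector with ‖Tx‖ = 1. If (x, Tx) is not a weak CPP, then T is an extreme point of the closed unit ball of L(X, Y). -/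
open Metric

set_option synthInstance.maxHeartbeats 1000000 in
lemma key_weakCPP {X Y : Type*} [NormedAddCommGroup X] [NormedSpace ℝ X]
    [NormedAddCommGroup Y] [NormedSpace ℝ Y]
    (hX : SmoothSp X) (hY : SmoothSp Y) (T : X →L[ℝ] Y) (hT : ‖T‖ = 1)
    (hrank : Module.rank ℝ (LinearMap.range (T : X →ₗ[ℝ] Y)) = 1)
    (x : X) (hx : ‖x‖ = 1) (hTx : ‖T x‖ = 1)
    (S : X →L[ℝ] Y) (hS : ‖S‖ ≤ 1) (hSx : S x = T x) (hne : S ≠ T) :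
    IsWeakCPP x (T x) := by
  obtain ⟨f, ⟨hf1, hfx⟩, hfu⟩ := hX x hx
  obtain ⟨g, ⟨hg1, hgTx⟩, -⟩ := hY (T x) hTx
  -- g ∘ T = f
  have hcompnorm : ∀ R : X →L[ℝ] Y, ‖R‖ ≤ 1 → R x = T x → g.comp R = f := by
    intro R hR hRx
    refine hfu _ ⟨le_antisymm ?_ ?_, by simp [hRx, hgTx]⟩
    · calc ‖g.comp R‖ ≤ ‖g‖ * ‖R‖ := ContinuousLinearMap.opNorm_comp_le _ _
        _ ≤ 1 := by rw [hg1]; simpa using hR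
    · have h := (g.comp R).le_opNorm x
      rw [hx, mul_one] at h
      calc (1:ℝ) = ‖(g.comp R) x‖ := by simp [hRx, hgTx]
        _ ≤ ‖g.comp R‖ := h
  have hgT : g.comp T = f := hcompnorm T (le_of_eq hT) rfl
  have hgS : g.comp S = f := hcompnorm S hS hSx
  obtain ⟨z₀, hz₀⟩ : ∃ z₀, S z₀ ≠ T z₀ := by
    by_contra h
    push_neg at h
    exact hne (ContinuousLinearMap.ext h)
  set z' : X := z₀ - (f z₀) • x with hz'def
  have hfz' : f z' = 0 := by simp [hz'def, hfx]
  have hgTz' : g (T z') = 0 := by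
    have := DFunLike.congr_fun hgT z'
    simpa using this.trans hfz'
  -- rank one: T z' = 0
  have hTz' : T z' = 0 := by
    obtain ⟨v₀, hv₀⟩ := rank_le_one_iff.mp (le_of_eq hrank)
    obtain ⟨r₀, hr₀⟩ := hv₀ ⟨T x, ⟨x, rfl⟩⟩
    obtain ⟨r, hr⟩ := hv₀ ⟨T z', ⟨z', rfl⟩⟩
    have hr₀' : r₀ • (v₀ : Y) = T x := congrArg Subtype.val hr₀
    have hr' : r • (v₀ : Y) = T z' := congrArg Subtype.val hr
    have h1 : r₀ * g v₀ = 1 := by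
      rw [← hgTx, ← hr₀', map_smul]; rfl
    have h2 : r * g v₀ = 0 := by
      rw [← hgTz', ← hr', map_smul]; rfl
    have hgv : g (v₀ : Y) ≠ 0 := by
      intro h; rw [h, mul_zero] at h1; exact one_ne_zero h1.symm
    have : r = 0 := by
      rcases mul_eq_zero.mp h2 with h | h
      · exact h
      · exact absurd h hgv
    rw [← hr', this, zero_smul]
  have hSz' : S z' ≠ 0 := by
    have : S z' - T z' = S z₀ - T z₀ := by
      simp [hz'def, map_sub, map_smul, hSx]
    rw [hTz', sub_zero] at this
    rw [this]
    exact sub_ne_zero_of_ne hz₀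
  have hz'ne : z' ≠ 0 := by
    intro h; apply hSz'; rw [h, map_zero]
  have hz'pos : (0:ℝ) < ‖z'‖ := norm_pos_iff.mpr hz'ne
  set z : X := ‖z'‖⁻¹ • z' with hzdef
  have hznorm : ‖z‖ = 1 := by
    rw [hzdef, norm_smul, norm_inv, norm_norm, inv_mul_cancel₀ hz'pos.ne']
  have hfz : f z = 0 := by rw [hzdef, map_smul, hfz', smul_zero]
  have hTz : T z = 0 := by rw [hzdef, map_smul, hTz', smul_zero]
  set y₀ : Y := S z with hy₀def
  have hy₀ne : y₀ ≠ 0 := by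
    rw [hy₀def, hzdef, map_smul]
    simp [hSz', hz'pos.ne']
  have hy₀pos : (0:ℝ) < ‖y₀‖ := norm_pos_iff.mpr hy₀ne
  have hgy₀ : g y₀ = 0 := by
    have := DFunLike.congr_fun hgS z
    simpa using this.trans hfz
  refine ⟨z, hznorm, ?_, ‖y₀‖⁻¹ • y₀, ?_, ?_, 1, one_pos, ‖y₀‖, hy₀pos, ?_⟩
  · -- BJOrth x z
    intro t
    have h1 : f (x + t • z) = 1 := by simp [hfx, hfz]
    calc ‖x‖ = 1 := hx
      _ = ‖f (x + t • z)‖ := by rw [h1]; simp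
      _ ≤ ‖f‖ * ‖x + t • z‖ := f.le_opNorm _
      _ = ‖x + t • z‖ := by rw [hf1, one_mul]
  · rw [norm_smul, norm_inv, norm_norm, inv_mul_cancel₀ hy₀pos.ne']
  · -- BJOrth (T x) w
    intro t
    have h1 : g (T x + t • ‖y₀‖⁻¹ • y₀) = 1 := by simp [hgTx, hgy₀]
    calc ‖T x‖ = 1 := hTx
      _ = ‖g (T x + t • ‖y₀‖⁻¹ • y₀)‖ := by rw [h1]; simp
      _ ≤ ‖g‖ * ‖T x + t • ‖y₀‖⁻¹ • y₀‖ := g.le_opNorm _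
      _ = _ := by rw [hg1, one_mul]
  · intro a b _ hnorm
    have hw : (b * ‖y₀‖) • (‖y₀‖⁻¹ • y₀) = b • y₀ := by
      rw [smul_smul, mul_assoc, mul_inv_cancel₀ hy₀pos.ne', mul_one]
    rw [hw]
    have hval : a • T x + b • y₀ = S (a • x + b • z) := by
      rw [map_add, map_smul, map_smul, hSx, hy₀def]
    rw [hval]
    calc ‖S (a • x + b • z)‖ ≤ ‖S‖ * ‖a • x + b • z‖ := S.le_opNorm _
      _ ≤ 1 := by rw [hnorm, mul_one]; exact hS

theorem stmt7 {X Y : Type*} [NormedAddCommGroup X] [NormedSpace ℝ X] [CompleteSpace X]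
    [NormedAddCommGroup Y] [NormedSpace ℝ Y] [CompleteSpace Y] [StrictConvexSpace ℝ Y]
    (hX : SmoothSp X) (hY : SmoothSp Y) (T : X →L[ℝ] Y) (hT : ‖T‖ = 1)
    (hrank : Module.rank ℝ (LinearMap.range (T : X →ₗ[ℝ] Y)) = 1)
    (x : X) (hx : ‖x‖ = 1) (hTx : ‖T x‖ = 1)
    (hncpp : ¬ IsWeakCPP x (T x)) :
    T ∈ Set.extremePoints ℝ (closedBall (0 : X →L[ℝ] Y) 1) := by
  rw [mem_extremePoints]
  refine ⟨by simpa [mem_closedBall, dist_zero_right] using le_of_eq hT, ?_⟩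
  intro T₁ hT₁ T₂ hT₂ hseg
  rw [mem_closedBall, dist_zero_right] at hT₁ hT₂
  obtain ⟨a, b, ha, hb, hab, hcomb⟩ := hseg
  -- T₁ x = T₂ x = T x by strict convexity
  have hT₁x : ‖T₁ x‖ ≤ 1 := by
    calc ‖T₁ x‖ ≤ ‖T₁‖ * ‖x‖ := T₁.le_opNorm x
      _ ≤ 1 := by rw [hx, mul_one]; exact hT₁
  have hT₂x : ‖T₂ x‖ ≤ 1 := by
    calc ‖T₂ x‖ ≤ ‖T₂‖ * ‖x‖ := T₂.le_opNorm x
      _ ≤ 1 := by rw [hx, mul_one]; exact hT₂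
  have hcombx : a • T₁ x + b • T₂ x = T x := by
    have := DFunLike.congr_fun hcomb x
    simpa using this
  have heqx : T₁ x = T₂ x := by
    by_contra hne
    have hconv := strictConvex_closedBall ℝ (0 : Y) 1
    have hmem₁ : T₁ x ∈ closedBall (0:Y) 1 := by
      rwa [mem_closedBall, dist_zero_right]
    have hmem₂ : T₂ x ∈ closedBall (0:Y) 1 := by
      rwa [mem_closedBall, dist_zero_right]
    have := hconv hmem₁ hmem₂ hne ha hb hab
    rw [hcombx, interior_closedBall (0:Y) one_ne_zero, mem_ball, dist_zero_right] at this
    exact absurd hTx (ne_of_lt this)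
  have hT₁xx : T₁ x = T x := by
    rw [← hcombx, heqx, ← add_smul, hab, one_smul]
  have hT₂xx : T₂ x = T x := heqx ▸ hT₁xx
  have h1 : T₁ = T := by
    by_contra hne
    exact hncpp (key_weakCPP hX hY T hT hrank x hx hTx T₁ hT₁ hT₁xx hne)
  have h2 : T₂ = T := by
    by_contra hne
    exact hncpp (key_weakCPP hX hY T hT hrank x hx hTx T₂ hT₂ hT₂xx hne)
  exact ⟨h1, h2⟩
end

section
/- In ℓ₄² (ℝ² with norm ‖(x,y)‖ = (x⁴ + y⁴)^{1/4}), a pair of unit vectors ((x, y), (x₁, y₁)) is not a CPP if and only if xy = 0 and x₁y₁ ≠ 0. -/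
open Metric

instance : Fact ((1:ENNReal) ≤ 4) := ⟨by norm_num⟩

noncomputable abbrev L4 := PiLp 4 (fun _ : Fin 2 => ℝ)

/-!
Let `u` be a unit vector and `z` a unit vector with `u ⊥_B z`, i.e. `u₀³z₀ + u₁³z₁ = 0`. Expanding
the fourth power, `‖a u + b z‖⁴ = a⁴ + b² (6a²S + 4abT + b²)` with `S = u₀²z₀² + u₁²z₁²` and
`T² ≤ S`. If `u` is off the axes then `S ≥ u₀²u₁² > 0` and the unit sphere has quadratic contact
with the line `u + ℝz` (`1 - a⁴ ≍ b²`); if `u` lies on an axis then `S = T = 0` and the contact is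
quartic (`a⁴ = 1 - b⁴`). The CPP condition asks that the contact at `v`, evaluated at `bμ`, be
dominated by the contact at `u`, evaluated at `b`, for a suitable `μ`. This fails exactly when the
contact at `u` is quartic and that at `v` quadratic, since `(bμ)² ≫ b⁴` as `b → 0`.
-/

lemma BJOrth.abs_mul_norm_le {X : Type*} [NormedAddCommGroup X] [NormedSpace ℝ X] {u z : X}
    (h : BJOrth u z) (a b : ℝ) : |a| * ‖u‖ ≤ ‖a • u + b • z‖ := by
  rcases eq_or_ne a 0 with rfl | ha
  · simp
  · calc |a| * ‖u‖ ≤ |a| * ‖u + (b / a) • z‖ := by gcongr; exact h _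
      _ = ‖a • u + b • z‖ := by
        rw [← Real.norm_eq_abs, ← norm_smul, smul_add, smul_smul, mul_div_cancel₀ b ha]

lemma abs_four_mul_mul_le {a b S T Z c : ℝ} (hc : 0 < c) (hS : 0 ≤ S) (hZ : 0 ≤ Z)
    (hT : T ^ 2 ≤ S * Z) : |4 * a * b * T| ≤ c * a ^ 2 * S + 4 / c * b ^ 2 * Z := by
  apply abs_le_of_sq_le_sq _ (by positivity)
  have h : (c * a ^ 2 * S) * (4 / c * b ^ 2 * Z) = 4 * a ^ 2 * b ^ 2 * (S * Z) := by
    field_simp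
  calc (4 * a * b * T) ^ 2 = 16 * a ^ 2 * b ^ 2 * T ^ 2 := by ring
    _ ≤ 16 * a ^ 2 * b ^ 2 * (S * Z) := by gcongr
    _ ≤ _ := by nlinarith [sq_nonneg (c * a ^ 2 * S - 4 / c * b ^ 2 * Z)]

namespace L4

lemma norm_pow_four (p : L4) : ‖p‖ ^ 4 = p 0 ^ 4 + p 1 ^ 4 := by
  have h := PiLp.norm_eq_sum (p := 4) (by norm_num) p
  simp only [ENNReal.toReal_ofNat, Fin.sum_univ_two, Real.norm_eq_abs] at h
  rw [h, ← Real.rpow_natCast, ← Real.rpow_mul (by positivity)]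
  norm_num [show ∀ x : ℝ, |x| ^ (4 : ℝ) = x ^ 4 from fun x => by
    rw [show (4 : ℝ) = (4 : ℕ) by norm_num, Real.rpow_natCast, Even.pow_abs (by decide)]]

def orthForm (u z : L4) : ℝ := u 0 ^ 3 * z 0 + u 1 ^ 3 * z 1

def quadCoeff (u z : L4) : ℝ := u 0 ^ 2 * z 0 ^ 2 + u 1 ^ 2 * z 1 ^ 2

def cubicCoeff (u z : L4) : ℝ := u 0 * z 0 ^ 3 + u 1 * z 1 ^ 3

lemma norm_smul_add_smul_pow_four (u z : L4) (a b : ℝ) :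
    ‖a • u + b • z‖ ^ 4 = a ^ 4 * ‖u‖ ^ 4 + 4 * a ^ 3 * b * orthForm u z
      + 6 * a ^ 2 * b ^ 2 * quadCoeff u z + 4 * a * b ^ 3 * cubicCoeff u z + b ^ 4 * ‖z‖ ^ 4 := by
  simp only [norm_pow_four, orthForm, quadCoeff, cubicCoeff, PiLp.add_apply, PiLp.smul_apply,
    smul_eq_mul]
  ring

lemma quadCoeff_nonneg (u z : L4) : 0 ≤ quadCoeff u z := by
  unfold quadCoeff; positivity

lemma two_mul_quadCoeff_le (u z : L4) : 2 * quadCoeff u z ≤ ‖u‖ ^ 4 + ‖z‖ ^ 4 := by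
  rw [norm_pow_four, norm_pow_four, quadCoeff]
  nlinarith [sq_nonneg (u 0 ^ 2 - z 0 ^ 2), sq_nonneg (u 1 ^ 2 - z 1 ^ 2)]

lemma sq_cubicCoeff_le (u z : L4) : cubicCoeff u z ^ 2 ≤ quadCoeff u z * ‖z‖ ^ 4 := by
  rw [norm_pow_four, quadCoeff, cubicCoeff]
  nlinarith [sq_nonneg (u 0 * z 0 * z 1 ^ 2 - u 1 * z 1 * z 0 ^ 2)]

lemma norm_smul_add_smul_pow_four_of_orthForm {u z : L4} (h : orthForm u z = 0) (a b : ℝ) :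
    ‖a • u + b • z‖ ^ 4 = a ^ 4 * ‖u‖ ^ 4
      + b ^ 2 * (6 * a ^ 2 * quadCoeff u z + 4 * a * b * cubicCoeff u z + b ^ 2 * ‖z‖ ^ 4) := by
  rw [norm_smul_add_smul_pow_four, h]
  ring

lemma norm_smul_add_smul_pow_four_ge_quartic {u z : L4} (h : orthForm u z = 0) (a b : ℝ) :
    a ^ 4 * ‖u‖ ^ 4 + b ^ 4 * ‖z‖ ^ 4 / 3 ≤ ‖a • u + b • z‖ ^ 4 := by
  have hT := abs_four_mul_mul_le (a := a) (b := b) (c := 6) (by norm_num) (quadCoeff_nonneg u z)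
    (by positivity) (sq_cubicCoeff_le u z)
  rw [norm_smul_add_smul_pow_four_of_orthForm h]
  nlinarith [neg_abs_le (4 * a * b * cubicCoeff u z), sq_nonneg b]

lemma bjOrth_iff (u z : L4) : BJOrth u z ↔ orthForm u z = 0 := by
  constructor
  · intro h
    have hf : (fun t : ℝ => ‖u + t • z‖ ^ 4) = fun t => ‖u‖ ^ 4 + t * (4 * orthForm u z)
        + t ^ 2 * (6 * quadCoeff u z) + t ^ 3 * (4 * cubicCoeff u z) + t ^ 4 * ‖z‖ ^ 4 := by
      ext t
      rw [← one_smul ℝ u, norm_smul_add_smul_pow_four, one_smul]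
      ring
    have hmin : IsLocalMin (fun t : ℝ => ‖u + t • z‖ ^ 4) 0 :=
      Filter.Eventually.of_forall fun t => by
        simpa using pow_le_pow_left₀ (norm_nonneg u) (h t) 4
    have hderiv : HasDerivAt (fun t : ℝ => ‖u + t • z‖ ^ 4) (4 * orthForm u z) 0 := by
      rw [hf]
      have := (((((hasDerivAt_id (0 : ℝ)).mul_const (4 * orthForm u z)).const_add (‖u‖ ^ 4)).add
        ((hasDerivAt_pow 2 (0 : ℝ)).mul_const (6 * quadCoeff u z))).add
        ((hasDerivAt_pow 3 (0 : ℝ)).mul_const (4 * cubicCoeff u z))).add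
        ((hasDerivAt_pow 4 (0 : ℝ)).mul_const (‖z‖ ^ 4))
      exact this.congr_deriv (by norm_num)
    have := hmin.hasDerivAt_eq_zero hderiv
    linarith
  · intro h t
    have := norm_smul_add_smul_pow_four_ge_quartic h 1 t
    rw [one_smul, one_pow, one_mul] at this
    exact le_of_pow_le_pow_left₀ (n := 4) (by norm_num) (norm_nonneg _)
      (by linarith [show 0 ≤ t ^ 4 * ‖z‖ ^ 4 by positivity])

lemma norm_smul_add_smul_pow_four_ge_quadCoeff {u z : L4} (h : orthForm u z = 0) (a b : ℝ) :
    a ^ 4 * ‖u‖ ^ 4 + b ^ 2 * (4 * a ^ 2 * quadCoeff u z - b ^ 2 * ‖z‖ ^ 4)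
      ≤ ‖a • u + b • z‖ ^ 4 := by
  have hT := abs_four_mul_mul_le (a := a) (b := b) (c := 2) (by norm_num) (quadCoeff_nonneg u z)
    (by positivity) (sq_cubicCoeff_le u z)
  rw [norm_smul_add_smul_pow_four_of_orthForm h]
  nlinarith [neg_abs_le (4 * a * b * cubicCoeff u z), sq_nonneg b]

lemma norm_smul_add_smul_pow_four_le_quadCoeff {u z : L4} (h : orthForm u z = 0) (a b : ℝ) :
    ‖a • u + b • z‖ ^ 4
      ≤ a ^ 4 * ‖u‖ ^ 4 + b ^ 2 * (8 * a ^ 2 * quadCoeff u z + 3 * b ^ 2 * ‖z‖ ^ 4) := by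
  have hT := abs_four_mul_mul_le (a := a) (b := b) (c := 2) (by norm_num) (quadCoeff_nonneg u z)
    (by positivity) (sq_cubicCoeff_le u z)
  rw [norm_smul_add_smul_pow_four_of_orthForm h]
  nlinarith [le_abs_self (4 * a * b * cubicCoeff u z), sq_nonneg b]

lemma sq_mul_sq_le_quadCoeff {u z : L4} (hu : ‖u‖ = 1) (hz : ‖z‖ = 1) (h : orthForm u z = 0) :
    u 0 ^ 2 * u 1 ^ 2 ≤ quadCoeff u z := by
  rcases eq_or_ne (u 1) 0 with h1 | h1
  · simpa [h1] using quadCoeff_nonneg u z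
  have hu4 : u 0 ^ 4 + u 1 ^ 4 = 1 := by rw [← norm_pow_four, hu, one_pow]
  have hz4 : z 0 ^ 4 + z 1 ^ 4 = 1 := by rw [← norm_pow_four, hz, one_pow]
  unfold orthForm at h
  -- `z` is proportional to `(u₁³, -u₀³)`, and `u₀¹² + u₁¹² ≤ 1` forces `z₀² ≥ u₁⁶`.
  have hS : quadCoeff u z * u 1 ^ 6 = u 0 ^ 2 * u 1 ^ 2 * z 0 ^ 2 := by
    unfold quadCoeff
    linear_combination (u 1 ^ 2 * (u 1 ^ 3 * z 1 - u 0 ^ 3 * z 0)) * h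
      + (u 0 ^ 2 * u 1 ^ 2 * z 0 ^ 2) * hu4
  have hz0 : z 0 ^ 4 * (u 0 ^ 12 + u 1 ^ 12) = u 1 ^ 12 := by
    linear_combination (-((u 1 ^ 3 * z 1) ^ 3 - (u 1 ^ 3 * z 1) ^ 2 * (u 0 ^ 3 * z 0)
      + (u 1 ^ 3 * z 1) * (u 0 ^ 3 * z 0) ^ 2 - (u 0 ^ 3 * z 0) ^ 3)) * h + u 1 ^ 12 * hz4
  have hC : u 0 ^ 12 + u 1 ^ 12 ≤ 1 := by
    have h3 : (u 0 ^ 4 + u 1 ^ 4) ^ 3 = 1 := by rw [hu4, one_pow]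
    nlinarith [show (0 : ℝ) ≤ u 0 ^ 8 * u 1 ^ 4 + u 0 ^ 4 * u 1 ^ 8 by positivity]
  have h6 : u 1 ^ 6 ≤ z 0 ^ 2 := by
    refine (pow_le_pow_iff_left₀ (by positivity) (by positivity) two_ne_zero).1 ?_
    nlinarith [show 0 ≤ z 0 ^ 4 by positivity]
  have hm : 0 ≤ u 0 ^ 2 * u 1 ^ 2 := by positivity
  refine le_of_mul_le_mul_right ?_ (by positivity : 0 < u 1 ^ 6)
  rw [hS]
  exact mul_le_mul_of_nonneg_left h6 hm

lemma eq_zero_of_coord_eq_zero {u : L4} (h0 : u 0 = 0) (h1 : u 1 = 0) : u = 0 := by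
  ext i; fin_cases i <;> simp [h0, h1]

lemma norm_smul_add_smul_pow_four_of_mul_eq_zero {u z : L4} (hu : u ≠ 0) (hu01 : u 0 * u 1 = 0)
    (h : orthForm u z = 0) (a b : ℝ) :
    ‖a • u + b • z‖ ^ 4 = a ^ 4 * ‖u‖ ^ 4 + b ^ 4 * ‖z‖ ^ 4 := by
  suffices quadCoeff u z = 0 ∧ cubicCoeff u z = 0 by
    rw [norm_smul_add_smul_pow_four, h, this.1, this.2]; ring
  unfold orthForm at h
  unfold quadCoeff cubicCoeff
  rcases mul_eq_zero.1 hu01 with h0 | h1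
  · have h1 : u 1 ≠ 0 := fun h1 => hu (eq_zero_of_coord_eq_zero h0 h1)
    have hz : z 1 = 0 := by simpa [h0, h1] using h
    simp [h0, hz]
  · have h0 : u 0 ≠ 0 := fun h0 => hu (eq_zero_of_coord_eq_zero h0 h1)
    have hz : z 0 = 0 := by simpa [h0, h1] using h
    simp [h1, hz]

lemma exists_norm_eq_one_orthForm_eq_zero {v : L4} (hv : v ≠ 0) :
    ∃ w : L4, ‖w‖ = 1 ∧ orthForm v w = 0 := by
  set w₀ : L4 := WithLp.toLp 4 ![v 1 ^ 3, -v 0 ^ 3] with hw₀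
  have hw₀0 : w₀ ≠ 0 := by
    intro h
    have h0 : w₀ 1 = 0 := by rw [h]; rfl
    have h1 : w₀ 0 = 0 := by rw [h]; rfl
    simp only [hw₀, PiLp.toLp_apply, Matrix.cons_val_zero, Matrix.cons_val_one, neg_eq_zero,
      pow_eq_zero_iff three_ne_zero] at h0 h1
    exact hv (eq_zero_of_coord_eq_zero h0 h1)
  refine ⟨‖w₀‖⁻¹ • w₀, norm_smul_inv_norm hw₀0, ?_⟩
  simp only [orthForm, hw₀, PiLp.smul_apply, Matrix.cons_val_zero, smul_eq_mul,
    Matrix.cons_val_one, Matrix.cons_val_fin_one, mul_neg]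
  ring

lemma isCPP_of_mul_eq_zero_right {u v : L4} (hu : ‖u‖ = 1) (hv : ‖v‖ = 1)
    (hv01 : v 0 * v 1 = 0) : IsCPP u v := by
  refine ⟨1, one_pos, 1 / 2, by norm_num, ?_⟩
  intro z hz hzu w hw hwv a b _ hab
  have hlow := norm_smul_add_smul_pow_four_ge_quartic ((bjOrth_iff u z).1 hzu) a b
  have hv_eq := norm_smul_add_smul_pow_four_of_mul_eq_zero (norm_ne_zero_iff.1 (by simp [hv]))
    hv01 ((bjOrth_iff v w).1 hwv) a (b * (1 / 2))
  rw [hu, hz, hab] at hlow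
  rw [hv, hw] at hv_eq
  refine (pow_le_one_iff_of_nonneg (norm_nonneg _) four_ne_zero).1 ?_
  rw [hv_eq]
  nlinarith [pow_two_nonneg (b ^ 2)]

lemma isCPP_of_mul_ne_zero_left {u v : L4} (hu : ‖u‖ = 1) (hv : ‖v‖ = 1)
    (hu01 : u 0 * u 1 ≠ 0) : IsCPP u v := by
  obtain ⟨hu0, hu1⟩ := mul_ne_zero_iff.1 hu01
  set m := u 0 ^ 2 * u 1 ^ 2
  have hm0 : 0 < m := by positivity
  have hm1 : m ≤ 1 / 2 := by
    have hu4 : u 0 ^ 4 + u 1 ^ 4 = 1 := by rw [← norm_pow_four, hu, one_pow]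
    nlinarith [sq_nonneg (u 0 ^ 2 - u 1 ^ 2)]
  refine ⟨m / 4, by positivity, m / 4, by positivity, ?_⟩
  intro z hz hzu w hw hwv a b hr hab
  have hsub : a • u + b • z - u = (a - 1) • u + b • z := by module
  have ha1 : |a| ≤ 1 := by simpa [hu, hab] using hzu.abs_mul_norm_le a b
  have ha : |a - 1| ≤ m / 4 := by
    simpa [hu] using (hzu.abs_mul_norm_le (a - 1) b).trans (hsub ▸ hr)
  have hb : |b| ≤ m / 2 := by
    calc |b| = ‖(a • u + b • z - u) - (a - 1) • u‖ := by
          rw [hsub, add_sub_cancel_left, norm_smul, hz, Real.norm_eq_abs, mul_one]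
      _ ≤ ‖a • u + b • z - u‖ + ‖(a - 1) • u‖ := norm_sub_le _ _
      _ ≤ m / 4 + m / 4 := by rw [norm_smul, hu, Real.norm_eq_abs, mul_one]; gcongr
      _ = m / 2 := by ring
  have ha2 : 1 / 2 ≤ a ^ 2 := by nlinarith [(abs_le.1 ha).1]
  have ha2' : a ^ 2 ≤ 1 := by nlinarith [abs_le.1 ha1]
  have hb2 : b ^ 2 ≤ m ^ 2 / 4 := by nlinarith [abs_le.1 hb]
  have hS := sq_mul_sq_le_quadCoeff hu hz ((bjOrth_iff u z).1 hzu)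
  have hSv := two_mul_quadCoeff_le v w
  have hlow := norm_smul_add_smul_pow_four_ge_quadCoeff ((bjOrth_iff u z).1 hzu) a b
  have hup := norm_smul_add_smul_pow_four_le_quadCoeff ((bjOrth_iff v w).1 hwv) a (b * (m / 4))
  rw [hu, hz, hab] at hlow
  rw [hv, hw] at hup hSv
  simp only [one_pow, mul_one] at hlow hup hSv
  refine (pow_le_one_iff_of_nonneg (norm_nonneg _) four_ne_zero).1 ?_
  have hfac : 8 * a ^ 2 * quadCoeff v w + 3 * (b * (m / 4)) ^ 2 ≤ 16 := by
    nlinarith [mul_le_mul ha2' (by linarith : quadCoeff v w ≤ 1) (quadCoeff_nonneg v w) one_pos.le,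
      mul_le_mul hb2 (show m ^ 2 ≤ 1 by nlinarith) (sq_nonneg m) (by positivity)]
  calc ‖a • v + (b * (m / 4)) • w‖ ^ 4 ≤ a ^ 4 + (b * (m / 4)) ^ 2 * 16 := by
        nlinarith [sq_nonneg (b * (m / 4))]
    _ ≤ a ^ 4 + b ^ 2 * (4 * a ^ 2 * quadCoeff u z - b ^ 2) := by
        have hm : m ^ 2 ≤ 4 * a ^ 2 * quadCoeff u z - b ^ 2 := by
          nlinarith [mul_le_mul ha2 hS hm0.le (by positivity)]
        nlinarith [mul_le_mul_of_nonneg_left hm (sq_nonneg b)]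
    _ ≤ 1 := hlow

lemma not_isCPP_of_mul_eq_zero_of_mul_ne_zero {u v : L4} (hu : ‖u‖ = 1) (hv : ‖v‖ = 1)
    (hu01 : u 0 * u 1 = 0) (hv01 : v 0 * v 1 ≠ 0) : ¬ IsCPP u v := by
  rintro ⟨r, hr, μ, hμ, H⟩
  have hu0 : u ≠ 0 := norm_ne_zero_iff.1 (by simp [hu])
  have hv0 : v ≠ 0 := norm_ne_zero_iff.1 (by simp [hv])
  obtain ⟨z, hz, hzu⟩ := exists_norm_eq_one_orthForm_eq_zero hu0
  obtain ⟨w, hw, hwv⟩ := exists_norm_eq_one_orthForm_eq_zero hv0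
  set m := v 0 ^ 2 * v 1 ^ 2
  have hm : 0 < m := by obtain ⟨_, _⟩ := mul_ne_zero_iff.1 hv01; positivity
  -- `b` so small that the quadratic contact `(bμ)²` at `v` beats the quartic contact `b⁴` at `u`
  obtain ⟨b, ⟨hbr, hb1, hbμ, hbm⟩, hb0⟩ : ∃ b : ℝ, (b ≤ r / 2 ∧ b ≤ 1 / 2 ∧ (b * μ) ^ 2 ≤ m
      ∧ b ^ 2 < 2 * m * μ ^ 2) ∧ 0 < b := by
    have hcont (c : ℝ) : Filter.Tendsto (fun b : ℝ => (b * c) ^ 2) (nhds 0) (nhds 0) :=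
      Continuous.tendsto' (by fun_prop) 0 0 (by simp)
    refine (Filter.Eventually.and ?_ self_mem_nhdsWithin).exists (f := nhdsWithin 0 (Set.Ioi 0))
    refine nhdsWithin_le_nhds ((eventually_le_nhds (by positivity)).and
      ((eventually_le_nhds (by norm_num)).and (((hcont μ).eventually_le_const hm).and ?_)))
    simpa using (hcont 1).eventually_lt_const (by positivity : (0 : ℝ) < 2 * m * μ ^ 2)
  have hb4 : b ^ 4 ≤ 1 / 16 := by
    linarith [pow_le_pow_left₀ hb0.le hb1 4, show ((1 : ℝ) / 2) ^ 4 = 1 / 16 by norm_num]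
  obtain ⟨a, ha0, ha4⟩ : ∃ a : ℝ, 0 ≤ a ∧ a ^ 4 = 1 - b ^ 4 :=
    ⟨_, Real.rpow_nonneg (by linarith) _, Real.rpow_inv_natCast_pow (by linarith) four_ne_zero⟩
  have ha1 : a ≤ 1 :=
    (pow_le_one_iff_of_nonneg ha0 four_ne_zero).1 (by linarith [pow_pos hb0 4])
  have haxis := norm_smul_add_smul_pow_four_of_mul_eq_zero hu0 hu01 hzu
  have hab : ‖a • u + b • z‖ = 1 := by
    rw [← pow_eq_one_iff_of_nonneg (norm_nonneg _) four_ne_zero, haxis, hu, hz]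
    linarith
  have hr' : ‖a • u + b • z - u‖ ≤ r := by
    rw [show a • u + b • z - u = (a - 1) • u + b • z by module,
      ← pow_le_pow_iff_left₀ (norm_nonneg _) hr.le four_ne_zero, haxis, hu, hz]
    have h1a : 1 - a ≤ b ^ 4 := by linarith [pow_le_of_le_one ha0 ha1 four_ne_zero]
    have h1a' : (a - 1) ^ 4 ≤ 1 - a := by
      rw [show (a - 1) ^ 4 = (1 - a) ^ 4 by ring]
      exact pow_le_of_le_one (by linarith) (by linarith) four_ne_zero
    have hbr4 : b ^ 4 ≤ (r / 2) ^ 4 := pow_le_pow_left₀ hb0.le hbr 4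
    nlinarith [pow_pos hr 4]
  have hle := H z hz ((bjOrth_iff u z).2 hzu) w hw ((bjOrth_iff v w).2 hwv) a b hr' hab
  have hlow := norm_smul_add_smul_pow_four_ge_quadCoeff hwv a (b * μ)
  have hS := sq_mul_sq_le_quadCoeff hv hw hwv
  rw [hv, hw] at hlow
  simp only [one_pow, mul_one] at hlow
  have h4 : ‖a • v + (b * μ) • w‖ ^ 4 ≤ 1 := pow_le_one₀ (norm_nonneg _) hle
  have ha2 : 3 / 4 ≤ a ^ 2 := by
    nlinarith [pow_le_of_le_one (sq_nonneg a) (by nlinarith) two_ne_zero]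
  have hfac : 2 * m ≤ 4 * a ^ 2 * quadCoeff v w - (b * μ) ^ 2 := by
    nlinarith [mul_le_mul ha2 hS hm.le (by positivity)]
  nlinarith [mul_le_mul_of_nonneg_left hfac (sq_nonneg (b * μ)),
    mul_pos (pow_pos hb0 2) (sub_pos.2 hbm)]

end L4

theorem stmt9 (u v : L4) (hu : ‖u‖ = 1) (hv : ‖v‖ = 1) :
    ¬ IsCPP u v ↔ (u 0 * u 1 = 0 ∧ v 0 * v 1 ≠ 0) := by
  refine ⟨fun hnot => ?_, fun ⟨hu01, hv01⟩ =>
    L4.not_isCPP_of_mul_eq_zero_of_mul_ne_zero hu hv hu01 hv01⟩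
  by_cases hu01 : u 0 * u 1 = 0
  · exact ⟨hu01, fun hv01 => hnot (L4.isCPP_of_mul_eq_zero_right hu hv hv01)⟩
  · exact absurd (L4.isCPP_of_mul_ne_zero_left hu hv hu01) hnot
end

section
/- Let X, Y be two-dimensional smooth real Banach spaces with Y strictly convex. Let T : X → Y have rank 2, ‖T‖ = 1, M_T = {±x}, y a unit vector with x ⊥_B y, k = ‖Ty‖, w = Ty/k. If T is not an extreme contraction, then (x, Tx) is a μ-CPP with respect to (y, w) for some μ > k. -/
/-! Write `T` as a proper convex combination of contractions `T₁ ≠ T` and `T₂`. Since `T x` is a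
unit vector of the strictly convex space `Y`, `T₁ x = T₂ x = T x`. Smoothness of `X` forces
`f ∘ Tᵢ`, for `f` the supporting functional at `T x`, to be the functional at `x` that kills `y`;
hence `Tᵢ y` lies in `ker f`, the line through `T y`, say `Tᵢ y = αᵢ • T y`. As `T y` is the same
convex combination of `α₁ • T y` and `α₂ • T y`, and `α₁ ≠ 1` because `T₁ ≠ T`, some `αᵢ > 1`;
the contraction `Tᵢ` then witnesses the `μ`-CPP with `μ = αᵢ ‖T y‖`. -/

open Metric

/-- `(x, y')` is a `μ`-CPP with respect to the pair `(z, w)`. -/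
def IsMuCPP {X Y : Type*} [NormedAddCommGroup X] [NormedSpace ℝ X]
    [NormedAddCommGroup Y] [NormedSpace ℝ Y] (x : X) (y' : Y) (z : X) (w : Y) (μ : ℝ) : Prop :=
  ∃ r > 0, ∀ a b : ℝ, ‖a • x + b • z - x‖ ≤ r → ‖a • x + b • z‖ = 1 →
    ‖a • y' + (b * μ) • w‖ ≤ 1

open Module

theorem Module.Dual.ker_eq_span_singleton {K V : Type*} [Field K] [AddCommGroup V] [Module K V]
    [FiniteDimensional K V] (hV : finrank K V = 2) {f : Dual K V} (hf : f ≠ 0) {u : V}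
    (hu : u ≠ 0) (hfu : f u = 0) : LinearMap.ker f = K ∙ u := by
  refine (Submodule.eq_of_le_of_finrank_eq
    ((Submodule.span_singleton_le_iff_mem _ _).2 hfu) ?_).symm
  have := f.finrank_ker_add_one_of_ne_zero hf
  rw [finrank_span_singleton hu]
  omega

theorem LinearMap.injective_of_finrank_range_eq {K V W : Type*} [DivisionRing K] [AddCommGroup V]
    [Module K V] [AddCommGroup W] [Module K W] [FiniteDimensional K V] {f : V →ₗ[K] W}
    (h : finrank K (range f) = finrank K V) : Function.Injective f := by
  have := f.finrank_range_add_finrank_ker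
  rw [← ker_eq_bot, ← Submodule.finrank_eq_zero]
  omega

section

variable {X Y : Type*} [NormedAddCommGroup X] [NormedSpace ℝ X]
  [NormedAddCommGroup Y] [NormedSpace ℝ Y]

/-- The functional factors through `X ⧸ ℝ ∙ y`, where `x` still has norm one. -/
theorem BJOrth.exists_dual {x y : X} (hx : ‖x‖ = 1) (hxy : BJOrth x y) :
    ∃ h : StrongDual ℝ X, ‖h‖ = 1 ∧ h x = 1 ∧ h y = 0 := by
  set S := ℝ ∙ y
  have hmk : ‖(Submodule.Quotient.mk x : X ⧸ S)‖ = 1 := by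
    refine le_antisymm (hx ▸ Submodule.Quotient.norm_mk_le S x) ?_
    rw [show ‖(Submodule.Quotient.mk x : X ⧸ S)‖ = infDist x S from QuotientAddGroup.norm_mk x,
      le_infDist ⟨0, S.zero_mem⟩]
    intro z hz
    obtain ⟨t, rfl⟩ := Submodule.mem_span_singleton.mp hz
    simpa [dist_eq_norm, sub_eq_add_neg, hx, ← neg_smul] using hxy (-t)
  obtain ⟨g, hg, hgx⟩ := exists_dual_vector ℝ (Submodule.Quotient.mk x : X ⧸ S) (by simp [hmk])
  refine ⟨g.comp S.mkQL, le_antisymm ?_ ?_, by simpa [hmk] using hgx, ?_⟩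
  · refine ContinuousLinearMap.opNorm_le_bound _ zero_le_one fun v => ?_
    calc ‖g (S.mkQL v)‖ ≤ ‖g‖ * ‖S.mkQL v‖ := g.le_opNorm _
      _ ≤ 1 * ‖v‖ := by rw [hg, one_mul, one_mul]; exact Submodule.Quotient.norm_mk_le S v
  · simpa [hmk, hx, hgx] using (g.comp S.mkQL).le_opNorm x
  · simp [(Submodule.Quotient.mk_eq_zero S).mpr (Submodule.mem_span_singleton_self y)]

theorem ContinuousLinearMap.ext_of_bjOrth [FiniteDimensional ℝ X] (hdX : finrank ℝ X = 2)
    {x y : X} (hx : ‖x‖ = 1) (hy : y ≠ 0) (hxy : BJOrth x y) {S S' : X →L[ℝ] Y}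
    (hSx : S x = S' x) (hSy : S y = S' y) : S = S' := by
  obtain ⟨h, -, hhx, hhy⟩ := hxy.exists_dual hx
  have hker := Dual.ker_eq_span_singleton hdX (f := (h : X →ₗ[ℝ] ℝ))
    (fun h0 => by simpa [hhx] using LinearMap.congr_fun h0 x) hy hhy
  ext v
  obtain ⟨c, hc⟩ : ∃ c : ℝ, c • y = v - h v • x := by
    rw [← Submodule.mem_span_singleton, ← hker]
    simp [hhx]
  rw [← sub_add_cancel v (h v • x), ← hc]
  simp [hSx, hSy]

/-- `f ∘ S` norms `x`, so by smoothness it is the functional of `BJOrth.exists_dual`. -/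
theorem SmoothSp.apply_eq_zero_of_bjOrth (hX : SmoothSp X) {x y : X} (hx : ‖x‖ = 1)
    (hxy : BJOrth x y) {S : X →L[ℝ] Y} (hS : ‖S‖ ≤ 1) {f : StrongDual ℝ Y} (hf : ‖f‖ ≤ 1)
    (hfx : f (S x) = 1) : f (S y) = 0 := by
  obtain ⟨h, hh, hhx, hhy⟩ := hxy.exists_dual hx
  have hfS : ‖f.comp S‖ = 1 := by
    refine le_antisymm ((f.opNorm_comp_le S).trans (mul_le_one₀ hf (norm_nonneg _) hS)) ?_
    simpa [hx, hfx] using (f.comp S).le_opNorm x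
  obtain ⟨φ, -, hφ⟩ := hX x hx
  have hfSh : f.comp S = h := (hφ _ ⟨hfS, hfx⟩).trans (hφ _ ⟨hh, hhx⟩).symm
  simpa [hhy] using congr($hfSh y)

theorem ContinuousLinearMap.apply_mem_openSegment {T T₁ T₂ : X →L[ℝ] Y}
    (hT : T ∈ openSegment ℝ T₁ T₂) (v : X) : T v ∈ openSegment ℝ (T₁ v) (T₂ v) := by
  obtain ⟨a, b, ha, hb, hab, rfl⟩ := hT
  exact ⟨a, b, ha, hb, hab, by simp⟩

theorem eq_of_mem_openSegment_of_norm_eq [StrictConvexSpace ℝ Y] {u v w : Y} {r : ℝ}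
    (hv : ‖v‖ ≤ r) (hw : ‖w‖ ≤ r) (hu : u ∈ openSegment ℝ v w) (hur : ‖u‖ = r) :
    v = u ∧ w = u := by
  obtain rfl : v = w := by
    by_contra hvw
    have := openSegment_subset_ball_of_ne (z := 0) (by simpa using hv) (by simpa using hw) hvw hu
    simp [hur] at this
  rw [openSegment_same] at hu
  exact ⟨hu.symm, hu.symm⟩

theorem ContinuousLinearMap.apply_eq_of_mem_openSegment [StrictConvexSpace ℝ Y]
    {T T₁ T₂ : X →L[ℝ] Y} (hT₁ : ‖T₁‖ ≤ 1) (hT₂ : ‖T₂‖ ≤ 1) (hT : T ∈ openSegment ℝ T₁ T₂) {x : X}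
    (hTx : ‖T x‖ = ‖x‖) : T₁ x = T x ∧ T₂ x = T x :=
  eq_of_mem_openSegment_of_norm_eq (by simpa using T₁.le_of_opNorm_le hT₁ x)
    (by simpa using T₂.le_of_opNorm_le hT₂ x) (apply_mem_openSegment hT x) hTx

theorem one_lt_or_one_lt_of_mem_openSegment {u : Y} (hu : u ≠ 0) {α β : ℝ}
    (h : u ∈ openSegment ℝ (α • u) (β • u)) (hα : α ≠ 1) : 1 < α ∨ 1 < β := by
  obtain ⟨a, b, ha, hb, hab, h⟩ := h
  have hcoef : a * α + b * β = 1 := by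
    refine smul_left_injective ℝ hu ?_
    simpa [add_smul, mul_smul] using h
  by_contra! hle
  have : α < 1 := lt_of_le_of_ne hle.1 hα
  nlinarith

theorem exists_isMuCPP_of_apply_eq_smul {S : X →L[ℝ] Y} (hS : ‖S‖ ≤ 1) {x y : X} {u v : Y}
    (hSx : S x = u) {γ : ℝ} (hSy : S y = γ • v) (hv : v ≠ 0) (hγ : 1 < γ) :
    ∃ μ : ℝ, ‖v‖ < μ ∧ IsMuCPP x u y (‖v‖⁻¹ • v) μ := by
  have hv' : 0 < ‖v‖ := norm_pos_iff.mpr hv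
  refine ⟨γ * ‖v‖, (lt_mul_iff_one_lt_left hv').mpr hγ, 1, one_pos, fun a b _ hab => ?_⟩
  have hS_ab : a • u + (b * (γ * ‖v‖)) • (‖v‖⁻¹ • v) = S (a • x + b • y) := by
    rw [map_add, map_smul, map_smul, hSx, hSy, smul_smul, smul_smul]
    congr 2
    field_simp
  calc ‖a • u + (b * (γ * ‖v‖)) • (‖v‖⁻¹ • v)‖ = ‖S (a • x + b • y)‖ := by rw [hS_ab]
    _ ≤ ‖S‖ * ‖a • x + b • y‖ := S.le_opNorm _
    _ ≤ 1 := by rw [hab, mul_one]; exact hS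

/-- `S y` and `T y` both lie in the kernel of the supporting functional at `T x`, a line. -/
theorem exists_smul_eq_apply_of_apply_eq [FiniteDimensional ℝ Y] (hX : SmoothSp X)
    (hdY : finrank ℝ Y = 2) {x y : X} (hx : ‖x‖ = 1) (hxy : BJOrth x y) {T : X →L[ℝ] Y}
    (hT : ‖T‖ ≤ 1) (hTx : ‖T x‖ = 1) (hTy : T y ≠ 0) {S : X →L[ℝ] Y} (hS : ‖S‖ ≤ 1)
    (hSx : S x = T x) : ∃ α : ℝ, S y = α • T y := by
  obtain ⟨f, hf, hfTx⟩ := exists_dual_vector ℝ (T x) (by simp [hTx])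
  rw [hTx, RCLike.ofReal_one] at hfTx
  have hker := Dual.ker_eq_span_singleton hdY (f := (f : Y →ₗ[ℝ] ℝ))
    (fun h0 => by simpa [hfTx] using LinearMap.congr_fun h0 (T x)) hTy
    (hX.apply_eq_zero_of_bjOrth hx hxy hT hf.le hfTx)
  have hSy : S y ∈ LinearMap.ker (f : Y →ₗ[ℝ] ℝ) :=
    hX.apply_eq_zero_of_bjOrth hx hxy hS hf.le (hSx ▸ hfTx)
  obtain ⟨α, hα⟩ := Submodule.mem_span_singleton.mp (hker ▸ hSy)
  exact ⟨α, hα.symm⟩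

end

theorem stmt14_general {X Y : Type*} [NormedAddCommGroup X] [NormedSpace ℝ X]
    [NormedAddCommGroup Y] [NormedSpace ℝ Y] [StrictConvexSpace ℝ Y]
    [FiniteDimensional ℝ X] [FiniteDimensional ℝ Y]
    (hdX : Module.finrank ℝ X = 2) (hdY : Module.finrank ℝ Y = 2)
    (hX : SmoothSp X) (T : X →L[ℝ] Y) (hT : ‖T‖ = 1)
    (hrank : Module.rank ℝ (LinearMap.range (T : X →ₗ[ℝ] Y)) = 2)
    (x : X) (hx : ‖x‖ = 1) (hM : {u : X | ‖u‖ = 1 ∧ ‖T u‖ = 1} = {x, -x})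
    (y : X) (hy : ‖y‖ = 1) (hxy : BJOrth x y)
    (hnex : T ∉ Set.extremePoints ℝ (closedBall (0 : X →L[ℝ] Y) 1)) :
    ∃ μ : ℝ, ‖T y‖ < μ ∧ IsMuCPP x (T x) y ((‖T y‖)⁻¹ • T y) μ := by
  have hTx : ‖T x‖ = 1 := (hM.symm ▸ Or.inl rfl : x ∈ {u : X | ‖u‖ = 1 ∧ ‖T u‖ = 1}).2
  have hy0 : y ≠ 0 := norm_ne_zero_iff.mp (by simp [hy])
  have hTy : T y ≠ 0 := (map_ne_zero_iff _ <| (T : X →ₗ[ℝ] Y).injective_of_finrank_range_eq <|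
    by rw [finrank_eq_of_rank_eq hrank, hdX]).mpr hy0
  obtain ⟨T₁, hT₁, T₂, hT₂, hseg, hT₁T⟩ : ∃ T₁ ∈ closedBall (0 : X →L[ℝ] Y) 1,
      ∃ T₂ ∈ closedBall (0 : X →L[ℝ] Y) 1, T ∈ openSegment ℝ T₁ T₂ ∧ T₁ ≠ T := by
    simpa [mem_extremePoints_iff_left, hT] using hnex
  rw [mem_closedBall_zero_iff] at hT₁ hT₂
  obtain ⟨hT₁x, hT₂x⟩ := ContinuousLinearMap.apply_eq_of_mem_openSegment hT₁ hT₂ hseg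
    (hTx.trans hx.symm)
  obtain ⟨α, hα⟩ := exists_smul_eq_apply_of_apply_eq hX hdY hx hxy hT.le hTx hTy hT₁ hT₁x
  obtain ⟨β, hβ⟩ := exists_smul_eq_apply_of_apply_eq hX hdY hx hxy hT.le hTx hTy hT₂ hT₂x
  have hα1 : α ≠ 1 := fun h =>
    hT₁T (ContinuousLinearMap.ext_of_bjOrth hdX hx hy0 hxy hT₁x (by rw [hα, h, one_smul]))
  have hseg_y := ContinuousLinearMap.apply_mem_openSegment hseg y
  rw [hα, hβ] at hseg_y
  rcases one_lt_or_one_lt_of_mem_openSegment hTy hseg_y hα1 with h | h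
  · exact exists_isMuCPP_of_apply_eq_smul hT₁ hT₁x hα hTy h
  · exact exists_isMuCPP_of_apply_eq_smul hT₂ hT₂x hβ hTy h

theorem stmt14 {X Y : Type*} [NormedAddCommGroup X] [NormedSpace ℝ X]
    [NormedAddCommGroup Y] [NormedSpace ℝ Y] [StrictConvexSpace ℝ Y]
    [FiniteDimensional ℝ X] [FiniteDimensional ℝ Y]
    (hdX : Module.finrank ℝ X = 2) (hdY : Module.finrank ℝ Y = 2)
    (hX : SmoothSp X) (hY : SmoothSp Y) (T : X →L[ℝ] Y) (hT : ‖T‖ = 1)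
    (hrank : Module.rank ℝ (LinearMap.range (T : X →ₗ[ℝ] Y)) = 2)
    (x : X) (hx : ‖x‖ = 1) (hM : {u : X | ‖u‖ = 1 ∧ ‖T u‖ = 1} = {x, -x})
    (y : X) (hy : ‖y‖ = 1) (hxy : BJOrth x y)
    (hnex : T ∉ Set.extremePoints ℝ (closedBall (0 : X →L[ℝ] Y) 1)) :
    ∃ μ : ℝ, ‖T y‖ < μ ∧ IsMuCPP x (T x) y ((‖T y‖)⁻¹ • T y) μ :=
  stmt14_general hdX hdY hX T hT hrank x hx hM y hy hxy hnex
end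

section
/- Let X be a two-dimensional real Banach space. Suppose that every norm-one linear operator T : X → X that attains its norm at two linearly independent unit vectors is an extreme point of the unit ball of L(X). Then X is strictly convex. -/
/-! If the unit sphere contained a segment with distinct endpoints `x`, `y`, pick a norm-one
functional `g` with `g x = g y = 1` and let `e` be the midpoint of the segment. The rank-one
operator `T = g ⊗ e` has norm one and sends both `x` and `y` to `e`, so by hypothesis it is an
extreme point of the unit ball of `L(X)`. Since `v ↦ g ⊗ v` is a linear isometry, `e` would then be
an extreme point of the unit ball of `X`, which it is not, being the midpoint of `x` and `y`. -/

open Metric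

theorem linearIndependent_pair_of_apply_eq_one {K V : Type*} [Field K] [AddCommGroup V]
    [Module K V] (f : V →ₗ[K] K) {x y : V} (hx : f x = 1) (hy : f y = 1) (hxy : x ≠ y) :
    LinearIndependent K ![x, y] := by
  refine LinearIndependent.pair_iff.2 fun s t hst ↦ ?_
  have hts : t = -s := by
    have := congrArg f hst
    simp only [map_add, map_smul, hx, hy, smul_eq_mul, mul_one, map_zero] at this
    linear_combination this
  subst hts
  have : s • (x - y) = 0 := by rw [smul_sub]; simpa [sub_eq_add_neg] using hst
  obtain hs | hxy' := smul_eq_zero.1 this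
  · simp [hs]
  · exact absurd (sub_eq_zero.1 hxy') hxy

section

variable {E F : Type*} [NormedAddCommGroup E] [NormedSpace ℝ E]
  [NormedAddCommGroup F] [NormedSpace ℝ F]

theorem LinearIsometry.mem_extremePoints_closedBall_of_map (f : E →ₗᵢ[ℝ] F) {v : E}
    (h : f v ∈ (closedBall (0 : F) 1).extremePoints ℝ) :
    v ∈ (closedBall (0 : E) 1).extremePoints ℝ := by
  refine ⟨by simpa using h.1, fun v₁ hv₁ v₂ hv₂ hv ↦ f.injective <| h.2 (x₂ := f v₂) ?_ ?_ ?_⟩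
  · simpa using hv₁
  · simpa using hv₂
  · exact (image_openSegment ℝ f.toLinearMap.toAffineMap v₁ v₂).subset ⟨v, hv, rfl⟩

theorem mem_extremePoints_closedBall_of_smulRight {g : StrongDual ℝ E} (hg : ‖g‖ = 1) {v : F}
    (h : g.smulRight v ∈ (closedBall (0 : E →L[ℝ] F) 1).extremePoints ℝ) :
    v ∈ (closedBall (0 : F) 1).extremePoints ℝ :=
  LinearIsometry.mem_extremePoints_closedBall_of_map
    ⟨(ContinuousLinearMap.smulRightL ℝ E F g).toLinearMap,
      fun w ↦ by simp [ContinuousLinearMap.norm_smulRight_apply, hg]⟩ h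

theorem exists_dual_apply_eq_one_of_norm_add_eq_two {x y : E} (hx : ‖x‖ ≤ 1) (hy : ‖y‖ ≤ 1)
    (hxy : ‖x + y‖ = 2) : ∃ g : StrongDual ℝ E, ‖g‖ = 1 ∧ g x = 1 ∧ g y = 1 := by
  obtain ⟨g, hg, hgxy⟩ := exists_dual_vector ℝ (x + y) (by rw [hxy]; norm_num)
  have hgx : g x ≤ 1 := (le_abs_self _).trans <| (g.le_opNorm x).trans <| by rw [hg]; simpa
  have hgy : g y ≤ 1 := (le_abs_self _).trans <| (g.le_opNorm y).trans <| by rw [hg]; simpa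
  rw [map_add, hxy, RCLike.ofReal_real_eq_id, id] at hgxy
  exact ⟨g, hg, by linarith, by linarith⟩

end

theorem stmt15_general {X : Type*} [NormedAddCommGroup X] [NormedSpace ℝ X]
    (h : ∀ T : X →L[ℝ] X, ‖T‖ = 1 →
      (∃ x y : X, ‖x‖ = 1 ∧ ‖y‖ = 1 ∧ LinearIndependent ℝ ![x, y] ∧
        ‖T x‖ = 1 ∧ ‖T y‖ = 1) →
      T ∈ Set.extremePoints ℝ (closedBall (0 : X →L[ℝ] X) 1)) :
    StrictConvexSpace ℝ X := by
  refine StrictConvexSpace.of_norm_add_ne_two fun x y hx hy hxy hsum ↦ ?_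
  obtain ⟨g, hg, hgx, hgy⟩ :=
    exists_dual_apply_eq_one_of_norm_add_eq_two hx.le hy.le hsum
  have he : ‖midpoint ℝ x y‖ = 1 := by
    rw [midpoint_eq_smul_add, norm_smul, hsum]; norm_num
  have hTe : g.smulRight (midpoint ℝ x y) ∈ (closedBall (0 : X →L[ℝ] X) 1).extremePoints ℝ :=
    h _ (by rw [ContinuousLinearMap.norm_smulRight_apply, hg, he, one_mul])
      ⟨x, y, hx, hy, linearIndependent_pair_of_apply_eq_one g.toLinearMap hgx hgy hxy,
        by simp [hgx, he], by simp [hgy, he]⟩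
  obtain ⟨hxe, hye⟩ := mem_extremePoints.1 (mem_extremePoints_closedBall_of_smulRight hg hTe) |>.2
    x (by simp [hx]) y (by simp [hy]) (midpoint_mem_openSegment x y)
  exact hxy (hxe.trans hye.symm)

theorem stmt15 {X : Type*} [NormedAddCommGroup X] [NormedSpace ℝ X]
    [FiniteDimensional ℝ X] (hdX : Module.finrank ℝ X = 2)
    (h : ∀ T : X →L[ℝ] X, ‖T‖ = 1 →
      (∃ x y : X, ‖x‖ = 1 ∧ ‖y‖ = 1 ∧ LinearIndependent ℝ ![x, y] ∧
        ‖T x‖ = 1 ∧ ‖T y‖ = 1) →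
      T ∈ Set.extremePoints ℝ (closedBall (0 : X →L[ℝ] X) 1)) :
    StrictConvexSpace ℝ X :=
  stmt15_general h
end

section
/- Let X be a real Banach space such that for every unit vector x, the pair (x, x) is a CPP. Then X is strictly convex. -/
open Metric

/-
If the unit sphere contained a segment `[x, y]` with `x ≠ y`, a functional `f` of norm at
most one with `f x = f y = 1` shows that every point of the line through `x` and `y` has norm
at least `1`. The intersection of this line with the unit ball is then a closed segment of the
sphere, and at its endpoint `v` the direction `z` of the line is Birkhoff–James orthogonal to `v`
in both senses. Applying the CPP property at `v` to the points `v - s z` of the segment, with the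
orthogonal direction `-z` on the other side, produces a point `v + s μ z` of the unit ball beyond
the endpoint.
-/

section

variable {X : Type*} [NormedAddCommGroup X] [NormedSpace ℝ X]

lemma StrongDual.apply_le_norm {f : StrongDual ℝ X} (hf : ‖f‖ ≤ 1) (p : X) : f p ≤ ‖p‖ :=
  calc f p ≤ ‖f p‖ := le_abs_self _
    _ ≤ 1 * ‖p‖ := f.le_of_opNorm_le hf p
    _ = ‖p‖ := one_mul _

lemma BJOrth.of_dual {f : StrongDual ℝ X} (hf : ‖f‖ ≤ 1) {v z : X} (hv : f v = ‖v‖)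
    (hz : f z = 0) : BJOrth v z := fun t => by
  simpa [hv, hz] using StrongDual.apply_le_norm hf (v + t • z)

lemma exists_dual_eq_one_of_norm_add_eq_two {x y : X} (hx : ‖x‖ = 1) (hy : ‖y‖ = 1)
    (hxy : ‖x + y‖ = 2) : ∃ f : StrongDual ℝ X, ‖f‖ ≤ 1 ∧ f x = 1 ∧ f y = 1 := by
  obtain ⟨f, hf, hfxy⟩ := exists_dual_vector'' ℝ (x + y)
  have hfx := StrongDual.apply_le_norm hf x
  have hfy := StrongDual.apply_le_norm hf y
  simp only [map_add, hxy, RCLike.ofReal_real_eq_id, id] at hfxy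
  exact ⟨f, hf, by linarith, by linarith⟩

lemma exists_maximal_segment_of_dual {f : StrongDual ℝ X} (hf : ‖f‖ ≤ 1) {x z : X} (hx : ‖x‖ ≤ 1)
    (hz : ‖z‖ = 1) (hfx : f x = 1) (hfz : f z = 0) {δ : ℝ} (hδ : ‖x + δ • z‖ ≤ 1) :
    ∃ T ≥ δ, (∀ s ∈ Set.Icc 0 T, ‖x + s • z‖ = 1) ∧ ∀ t > T, 1 < ‖x + t • z‖ := by
  have one_le (t : ℝ) : 1 ≤ ‖x + t • z‖ := by
    simpa [hfx, hfz] using StrongDual.apply_le_norm hf (x + t • z)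
  set S := {t : ℝ | ‖x + t • z‖ ≤ 1}
  have hS_closed : IsClosed S := isClosed_le (by fun_prop) continuous_const
  have hS_convex : Convex ℝ S := by
    have hS : S = LinearMap.toSpanSingleton ℝ X z ⁻¹' closedBall (-x) 1 := by
      ext t
      simp [S, dist_eq_norm, add_comm]
    exact hS ▸ (convex_closedBall (-x) 1).linear_preimage _
  have hS_bdd : BddAbove S := ⟨2, fun t (ht : ‖x + t • z‖ ≤ 1) => by
    have := norm_sub_le (x + t • z) x
    rw [add_sub_cancel_left, norm_smul, hz, mul_one, Real.norm_eq_abs] at this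
    linarith [le_abs_self t, hx]⟩
  have hδS : δ ∈ S := hδ
  have hTS : sSup S ∈ S := hS_closed.csSup_mem ⟨δ, hδS⟩ hS_bdd
  have h0S : (0 : ℝ) ∈ S := by simpa [S] using hx
  refine ⟨sSup S, le_csSup hS_bdd hδS, fun s hs => ?_, fun t ht => ?_⟩
  · exact le_antisymm (hS_convex.ordConnected.out h0S hTS hs) (one_le s)
  · exact lt_of_not_ge fun h => (le_csSup hS_bdd h).not_gt ht

lemma IsCPP.exists_pos_norm_add_smul_le_one {v z : X} (hcpp : IsCPP v v) (hz : ‖z‖ = 1)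
    (hvz : BJOrth v z) (hvz' : BJOrth v (-z)) {ℓ : ℝ} (hℓ : 0 < ℓ)
    (hseg : ∀ s ∈ Set.Icc 0 ℓ, ‖v - s • z‖ = 1) : ∃ t : ℝ, 0 < t ∧ ‖v + t • z‖ ≤ 1 := by
  obtain ⟨r, hr, μ, hμ, hcpp⟩ := hcpp
  set s := min r ℓ
  have hs : 0 < s := lt_min hr hℓ
  have hnear : ‖(1 : ℝ) • v + (-s) • z - v‖ ≤ r := by
    rw [one_smul, add_sub_cancel_left, norm_smul, hz, mul_one, Real.norm_eq_abs, abs_neg,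
      abs_of_pos hs]
    exact min_le_left r ℓ
  have hsphere : ‖(1 : ℝ) • v + (-s) • z‖ = 1 := by
    simpa [sub_eq_add_neg] using hseg s ⟨hs.le, min_le_right r ℓ⟩
  refine ⟨s * μ, by positivity, ?_⟩
  simpa using hcpp z hz hvz (-z) (by rwa [norm_neg]) hvz' 1 (-s) hnear hsphere

end

theorem stmt16_general {X : Type*} [NormedAddCommGroup X] [NormedSpace ℝ X]
    (h : ∀ x : X, ‖x‖ = 1 → IsCPP x x) :
    StrictConvexSpace ℝ X := by
  refine StrictConvexSpace.of_norm_add_ne_two fun x y hx hy hne hxy => ?_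
  obtain ⟨f, hf, hfx, hfy⟩ := exists_dual_eq_one_of_norm_add_eq_two hx hy hxy
  have hd : 0 < ‖y - x‖ := norm_pos_iff.2 (sub_ne_zero.2 hne.symm)
  set z := ‖y - x‖⁻¹ • (y - x)
  have hz : ‖z‖ = 1 := by rw [norm_smul, norm_inv, norm_norm, inv_mul_cancel₀ hd.ne']
  have hxz : x + ‖y - x‖ • z = y := by simp [z, smul_smul, hd.ne']
  have hfz : f z = 0 := by simp [z, hfx, hfy]
  obtain ⟨T, hT, hseg, hbeyond⟩ :=
    exists_maximal_segment_of_dual hf hx.le hz hfx hfz (δ := ‖y - x‖) (by rw [hxz, hy])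
  have hT0 : 0 < T := hd.trans_le hT
  set v := x + T • z
  have hv : ‖v‖ = 1 := hseg T ⟨hT0.le, le_rfl⟩
  have hfv : f v = ‖v‖ := by simp [v, hfx, hfz, hv]
  obtain ⟨t, ht, hvt⟩ := (h v hv).exists_pos_norm_add_smul_le_one hz
    (.of_dual hf hfv hfz) (.of_dual hf hfv (by simp [hfz])) hT0 fun s hs => by
      simpa [v, sub_smul, add_sub_assoc] using
        hseg (T - s) ⟨by linarith [hs.2], by linarith [hs.1]⟩
  exact (hbeyond (T + t) (by linarith)).not_ge (by simpa [v, add_smul, add_assoc] using hvt)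

theorem stmt16 {X : Type*} [NormedAddCommGroup X] [NormedSpace ℝ X] [CompleteSpace X]
    (h : ∀ x : X, ‖x‖ = 1 → IsCPP x x) :
    StrictConvexSpace ℝ X :=
  stmt16_general h
end

section
/- A real Banach space X (of dimension ≥ 2) is a Hilbert space (its norm is induced by an inner product) if and only if for every unit vector x, the pair (x, x) is a CPP with CPP constant (r, 1) for every r > 0. -/
/-!
At a unit vector `x`, the CPP condition with constant `(r, 1)` for all `r` says that Birkhoff–James
orthogonal directions of equal length are interchangeable: `‖a x + b z‖ = ‖a x + b w‖` whenever
`x ⊥ z`, `x ⊥ w` and `‖z‖ = ‖w‖` (`IsBJIsotropic`). Taking `w = -z`, every reflection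
`a x + b z ↦ a x - b z` is isometric, and two reflections along a line compose to a translation.
So a flat piece of a sphere, or two directions `y ± γ x` orthogonal to the same `x`, would make
`s ↦ ‖s x + y‖` periodic, against its linear growth: the norm is strictly convex and smooth.
Strict convexity turns isosceles orthogonality into `⊥`, so `‖u‖ = ‖w‖` gives the swap symmetry
`‖a u + b w‖ = ‖b u + a w‖`. For `x ⊥ y` and a norming functional `f` of `x + y`, swapping `x` with
`(‖x‖ / ‖x + y‖) (x + y)` shows `x ⊥ y - k x` for `k = ‖x + y‖ f x / ‖x‖² - 1`, so smoothness gives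
`‖x + y‖ f x = ‖x‖²`. Adding the same identity for `y` yields Pythagoras' theorem for `⊥`, and with
it the parallelogram law. Conversely, in an inner product space `⊥` is ordinary orthogonality.
-/

open Metric

section BJOrth

variable {X : Type*} [NormedAddCommGroup X] [NormedSpace ℝ X] {x y : X}

namespace BJOrth

theorem zero_left (y : X) : BJOrth 0 y := fun t => by simp

theorem smul_right_s17 (h : BJOrth x y) (c : ℝ) : BJOrth x (c • y) := fun t => by
  simpa [smul_smul] using h (t * c)

theorem neg_right (h : BJOrth x y) : BJOrth x (-y) := by
  simpa using h.smul_right_s17 (-1)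

theorem smul_left (h : BJOrth x y) (c : ℝ) : BJOrth (c • x) y := by
  rcases eq_or_ne c 0 with rfl | hc
  · simpa using zero_left y
  intro t
  rw [show c • x + t • y = c • (x + (t / c) • y) by rw [smul_add, smul_smul, mul_div_cancel₀ t hc],
    norm_smul, norm_smul]
  exact mul_le_mul_of_nonneg_left (h _) (norm_nonneg c)

theorem abs_mul_norm_le_s17 (h : BJOrth x y) (a b : ℝ) : |a| * ‖x‖ ≤ ‖a • x + b • y‖ := by
  simpa [norm_smul] using h.smul_left a b

end BJOrth

theorem bjOrth_of_apply_eq_zero {f : X →L[ℝ] ℝ} (hf : ‖f‖ ≤ 1) (hfx : f x = ‖x‖) (hfy : f y = 0) :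
    BJOrth x y := fun t =>
  calc ‖x‖ = f (x + t • y) := by simp [hfx, hfy]
    _ ≤ ‖f (x + t • y)‖ := le_abs_self _
    _ ≤ 1 * ‖x + t • y‖ := f.le_of_opNorm_le hf _
    _ = ‖x + t • y‖ := one_mul _

theorem exists_bjOrth_sub_smul (x y : X) : ∃ α : ℝ, BJOrth x (y - α • x) := by
  rcases eq_or_ne x 0 with rfl | hx
  · exact ⟨0, BJOrth.zero_left _⟩
  obtain ⟨f, hf, hfx⟩ := exists_dual_vector'' ℝ x
  rw [RCLike.ofReal_real_eq_id, id] at hfx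
  refine ⟨f y / ‖x‖, bjOrth_of_apply_eq_zero hf hfx ?_⟩
  rw [map_sub, map_smul, hfx, smul_eq_mul]
  field_simp [norm_ne_zero_iff.mpr hx]
  ring

theorem eq_zero_of_periodic_norm_smul_add {p : ℝ} (hx : x ≠ 0)
    (h : Function.Periodic (fun s : ℝ => ‖s • x + y‖) p) : p = 0 := by
  by_contra hp
  have hpx : 0 < |p| * ‖x‖ := by positivity
  obtain ⟨n, hn⟩ := exists_nat_gt (2 * ‖y‖ / (|p| * ‖x‖))
  have hbound : n * (|p| * ‖x‖) ≤ 2 * ‖y‖ := by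
    have hn' : ‖(n * p) • x + y‖ = ‖y‖ := by simpa using h.nat_mul_eq n
    calc n * (|p| * ‖x‖) = ‖(n * p) • x‖ := by
          rw [norm_smul, Real.norm_eq_abs, abs_mul, Nat.abs_cast, mul_assoc]
      _ ≤ ‖(n * p) • x + y‖ + ‖y‖ := norm_le_add_norm_add _ _
      _ = 2 * ‖y‖ := by rw [hn']; ring
  rw [div_lt_iff₀ hpx] at hn
  linarith

end BJOrth

def IsBJIsotropic (X : Type*) [NormedAddCommGroup X] [NormedSpace ℝ X] : Prop :=
  ∀ x z w : X, BJOrth x z → BJOrth x w → ‖z‖ = ‖w‖ → ∀ a b : ℝ, ‖a • x + b • z‖ = ‖a • x + b • w‖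

section CPP

variable {X : Type*} [NormedAddCommGroup X] [NormedSpace ℝ X]

theorem norm_smul_add_smul_le_of_isCPPConst
    (hH : ∀ x : X, ‖x‖ = 1 → ∀ r : ℝ, 0 < r → IsCPPConst x x r 1) {x z w : X} (hx : ‖x‖ = 1)
    (hz : ‖z‖ = 1) (hw : ‖w‖ = 1) (hxz : BJOrth x z) (hxw : BJOrth x w) (a b : ℝ) :
    ‖a • x + b • w‖ ≤ ‖a • x + b • z‖ := by
  rcases (norm_nonneg (a • x + b • z)).eq_or_lt with hs | hs
  · have ha : a = 0 := by simpa [hx, ← hs] using hxz.abs_mul_norm_le_s17 a b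
    simp [ha, norm_smul, hz, hw]
  set s := ‖a • x + b • z‖
  have hunit : ‖(a / s) • x + (b / s) • z‖ = 1 := by
    rw [show (a / s) • x + (b / s) • z = s⁻¹ • (a • x + b • z) by module, norm_smul, norm_inv,
      norm_norm, inv_mul_cancel₀ hs.ne']
  have hcpp := hH x hx (‖(a / s) • x + (b / s) • z - x‖ + 1) (by positivity) z hz hxz w hw hxw
    (a / s) (b / s) (le_add_of_nonneg_right zero_le_one) hunit
  rwa [mul_one, show (a / s) • x + (b / s) • w = s⁻¹ • (a • x + b • w) by module, norm_smul,
    norm_inv, norm_norm, inv_mul_le_iff₀ hs, mul_one] at hcpp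

theorem isBJIsotropic_of_isCPPConst
    (hH : ∀ x : X, ‖x‖ = 1 → ∀ r : ℝ, 0 < r → IsCPPConst x x r 1) : IsBJIsotropic X := by
  intro x z w hxz hxw hzw a b
  rcases eq_or_ne x 0 with rfl | hx
  · simp [norm_smul, hzw]
  rcases eq_or_ne z 0 with rfl | hz
  · rw [norm_zero, eq_comm, norm_eq_zero] at hzw
    simp [hzw]
  have hw : w ≠ 0 := norm_ne_zero_iff.mp (hzw ▸ norm_ne_zero_iff.mpr hz)
  have unit : ∀ v : X, v ≠ 0 → ‖‖v‖⁻¹ • v‖ = 1 := fun v hv => by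
    rw [norm_smul, norm_inv, norm_norm, inv_mul_cancel₀ (norm_ne_zero_iff.mpr hv)]
  have rescale : ∀ v : X, v ≠ 0 → ∀ c : ℝ, (c * ‖v‖) • (‖v‖⁻¹ • v) = c • v := fun v hv c => by
    rw [smul_smul, mul_assoc, mul_inv_cancel₀ (norm_ne_zero_iff.mpr hv), mul_one]
  have hbw : (b * ‖z‖) • (‖w‖⁻¹ • w) = b • w := by rw [hzw]; exact rescale w hw b
  have hxz' := (hxz.smul_left ‖x‖⁻¹).smul_right_s17 ‖z‖⁻¹
  have hxw' := (hxw.smul_left ‖x‖⁻¹).smul_right_s17 ‖w‖⁻¹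
  rw [← rescale x hx a, ← rescale z hz b, ← hbw]
  exact le_antisymm
    (norm_smul_add_smul_le_of_isCPPConst hH (unit x hx) (unit w hw) (unit z hz) hxw' hxz' _ _)
    (norm_smul_add_smul_le_of_isCPPConst hH (unit x hx) (unit z hz) (unit w hw) hxz' hxw' _ _)

end CPP

namespace IsBJIsotropic

variable {X : Type*} [NormedAddCommGroup X] [NormedSpace ℝ X] {x y : X}

theorem isCPPConst (h : IsBJIsotropic X) (x : X) (r : ℝ) : IsCPPConst x x r 1 :=
  fun z hz hxz w hw hxw a b _ hab => by
    rw [mul_one, h x w z hxw hxz (hw.trans hz.symm)]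
    exact hab.le

theorem norm_smul_add_smul_eq_norm_smul_sub_smul (h : IsBJIsotropic X) (hxy : BJOrth x y)
    (a b : ℝ) : ‖a • x + b • y‖ = ‖a • x - b • y‖ := by
  simpa [sub_eq_add_neg] using h x y (-y) hxy hxy.neg_right (norm_neg y).symm a b

theorem bjOrth_symm (h : IsBJIsotropic X) (hxy : BJOrth x y) : BJOrth y x := fun t => by
  have hrefl := h.norm_smul_add_smul_eq_norm_smul_sub_smul hxy t 1
  rw [one_smul, add_comm, norm_sub_rev] at hrefl
  have htri := norm_add_le (y + t • x) (y - t • x)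
  rw [show y + t • x + (y - t • x) = (2 : ℝ) • y by module, norm_smul, ← hrefl] at htri
  norm_num at htri
  linarith

theorem eq_zero_of_bjOrth_add_smul (h : IsBJIsotropic X) {γ : ℝ} (hx : x ≠ 0)
    (hxy : BJOrth x y) (hγ : BJOrth x (y + γ • x)) : γ = 0 := by
  have reflect := h.norm_smul_add_smul_eq_norm_smul_sub_smul hxy
  have hγ' : BJOrth x (y - γ • x) := fun t => by
    have := hγ (-t)
    rwa [show x + -t • (y + γ • x) = (1 - t * γ) • x - t • y by module, ← reflect,
      show (1 - t * γ) • x + t • y = x + t • (y - γ • x) by module] at this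
  have hnorm : ‖y + γ • x‖ = ‖y - γ • x‖ := by
    have := reflect γ 1
    rwa [one_smul, add_comm, norm_sub_rev] at this
  have hper : Function.Periodic (fun s : ℝ => ‖s • x + y‖) (2 * γ) := fun s => by
    have := h x _ _ hγ hγ' hnorm (s + γ) 1
    simp only [one_smul] at this
    show ‖(s + 2 * γ) • x + y‖ = ‖s • x + y‖
    calc ‖(s + 2 * γ) • x + y‖ = ‖(s + γ) • x + (y + γ • x)‖ := by congr 1; module
      _ = ‖(s + γ) • x + (y - γ • x)‖ := this
      _ = ‖s • x + y‖ := by congr 1; module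
  linarith [eq_zero_of_periodic_norm_smul_add hx hper]

theorem norm_lt_norm_add_smul (h : IsBJIsotropic X) {v d : X} {q : ℝ} (hd : d ≠ 0)
    (hvd : BJOrth v d) (hq : q ≠ 0) : ‖v‖ < ‖v + q • d‖ := by
  refine (hvd q).lt_of_ne fun heq => hq ?_
  have hqd : BJOrth (v + q • d) d := fun t => by
    rw [← heq, add_assoc, ← add_smul]
    exact hvd _
  have reflect : ∀ {u : X}, BJOrth u d → ∀ t : ℝ, ‖u + t • d‖ = ‖u - t • d‖ := fun hu t => by
    simpa using h.norm_smul_add_smul_eq_norm_smul_sub_smul hu 1 t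
  have hper : Function.Periodic (fun s : ℝ => ‖s • d + v‖) (2 * q) := fun s => by
    show ‖(s + 2 * q) • d + v‖ = ‖s • d + v‖
    calc ‖(s + 2 * q) • d + v‖ = ‖(v + q • d) + (s + q) • d‖ := by congr 1; module
      _ = ‖(v + q • d) - (s + q) • d‖ := reflect hqd _
      _ = ‖v - s • d‖ := by congr 1; module
      _ = ‖s • d + v‖ := by rw [← reflect hvd s, add_comm]
  linarith [eq_zero_of_periodic_norm_smul_add hd hper]

theorem norm_add_smul_lt_norm_add_smul (h : IsBJIsotropic X) {v d : X} {a b : ℝ} (hd : d ≠ 0)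
    (hvd : BJOrth v d) (hab : |a| < |b|) : ‖v + a • d‖ < ‖v + b • d‖ := by
  have habs : ∀ c : ℝ, ‖v + c • d‖ = ‖v + |c| • d‖ := fun c => by
    rcases abs_choice c with hc | hc
    · rw [hc]
    · rw [hc, neg_smul, ← sub_eq_add_neg]
      simpa using h.norm_smul_add_smul_eq_norm_smul_sub_smul hvd 1 c
  rw [habs a, habs b]
  have hb : 0 < |b| := (abs_nonneg a).trans_lt hab
  set θ := |a| / |b|
  have hθ1 : θ < 1 := (div_lt_one hb).mpr hab
  have hθ0 : 0 ≤ θ := by positivity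
  have hθb : θ * |b| = |a| := div_mul_cancel₀ _ hb.ne'
  calc ‖v + |a| • d‖ = ‖(1 - θ) • v + θ • (v + |b| • d)‖ := by
        rw [smul_add, smul_smul, hθb]; congr 1; module
    _ ≤ (1 - θ) * ‖v‖ + θ * ‖v + |b| • d‖ := by
        refine (norm_add_le _ _).trans_eq ?_
        rw [norm_smul, norm_smul, Real.norm_of_nonneg (by linarith), Real.norm_of_nonneg hθ0]
    _ < (1 - θ) * ‖v + |b| • d‖ + θ * ‖v + |b| • d‖ := by
        gcongr ?_ + _
        exact mul_lt_mul_of_pos_left (h.norm_lt_norm_add_smul hd hvd hb.ne') (by linarith)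
    _ = ‖v + |b| • d‖ := by ring

theorem bjOrth_of_norm_add_eq_norm_sub (h : IsBJIsotropic X) (hxy : ‖x + y‖ = ‖x - y‖) :
    BJOrth x y := by
  rcases eq_or_ne x 0 with rfl | hx
  · exact BJOrth.zero_left y
  obtain ⟨α, hα⟩ := exists_bjOrth_sub_smul x y
  have hvx := h.bjOrth_symm hα
  have heq : ‖(y - α • x) + (1 + α) • x‖ = ‖(y - α • x) + (α - 1) • x‖ := by
    rwa [← norm_neg ((y - α • x) + (α - 1) • x), show y - α • x + (1 + α) • x = x + y by module,
      show -(y - α • x + (α - 1) • x) = x - y by module]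
  have habs : |1 + α| = |α - 1| := by
    by_contra hne
    rcases lt_or_gt_of_ne hne with hlt | hlt
    · exact (h.norm_add_smul_lt_norm_add_smul hx hvx hlt).ne heq
    · exact (h.norm_add_smul_lt_norm_add_smul hx hvx hlt).ne' heq
  have hα0 : α = 0 := by
    rcases abs_eq_abs.mp habs with h1 | h1 <;> linarith
  simpa [hα0] using hα

theorem norm_smul_add_smul_comm (h : IsBJIsotropic X) {u w : X} (huw : ‖u‖ = ‖w‖) (a b : ℝ) :
    ‖a • u + b • w‖ = ‖b • u + a • w‖ := by
  have hbj : BJOrth (u + w) (u - w) := h.bjOrth_of_norm_add_eq_norm_sub <| by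
    rw [show u + w + (u - w) = (2 : ℝ) • u by module, show u + w - (u - w) = (2 : ℝ) • w by module,
      norm_smul, norm_smul, huw]
  have := h.norm_smul_add_smul_eq_norm_smul_sub_smul hbj ((a + b) / 2) ((a - b) / 2)
  convert this using 2 <;> module

theorem norm_add_mul_apply_eq_norm_sq (h : IsBJIsotropic X) (hxy : BJOrth x y) {f : X →L[ℝ] ℝ}
    (hf : ‖f‖ ≤ 1) (hfxy : f (x + y) = ‖x + y‖) : ‖x + y‖ * f x = ‖x‖ ^ 2 := by
  rcases eq_or_ne x 0 with rfl | hx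
  · simp
  set n := ‖x‖
  set c := ‖x + y‖
  have hn : 0 < n := norm_pos_iff.mpr hx
  have hc : 0 < c := hn.trans_le (by simpa using hxy 1)
  set k := (c * f x - n ^ 2) / n ^ 2
  have hbound : ∀ a b : ℝ, n * |a + b * k| ≤ ‖a • x + b • y‖ := fun a b => by
    have hnorm : ‖x‖ = ‖(n / c) • (x + y)‖ := by
      rw [norm_smul, Real.norm_of_nonneg (by positivity), div_mul_cancel₀ _ hc.ne']
    have hswap := h.norm_smul_add_smul_comm hnorm (a - b) (b * c / n)
    have hfval : f ((b * c / n) • x + (a - b) • (n / c) • (x + y)) = n * (a + b * k) := by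
      simp only [map_add, map_smul, smul_eq_mul, hfxy, k]
      field_simp
      ring
    calc n * |a + b * k| = |f ((b * c / n) • x + (a - b) • (n / c) • (x + y))| := by
          rw [hfval, abs_mul, abs_of_pos hn]
      _ ≤ 1 * ‖(b * c / n) • x + (a - b) • (n / c) • (x + y)‖ := f.le_of_opNorm_le hf _
      _ = ‖a • x + b • y‖ := by
          rw [one_mul, ← hswap, smul_smul, show b * c / n * (n / c) = b by field_simp]
          congr 1
          module
  have hbj : BJOrth x (y + (-k) • x) := fun t => by
    have := hbound (1 - t * k) t
    rwa [show 1 - t * k + t * k = 1 by ring, abs_one, mul_one,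
      show (1 - t * k) • x + t • y = x + t • (y + (-k) • x) by module] at this
  have hk : c * f x - n ^ 2 = 0 := by
    simpa [k, hn.ne'] using h.eq_zero_of_bjOrth_add_smul hx hxy hbj
  linarith

theorem norm_add_sq_eq_norm_sq_add_norm_sq (h : IsBJIsotropic X) (hxy : BJOrth x y) :
    ‖x + y‖ ^ 2 = ‖x‖ ^ 2 + ‖y‖ ^ 2 := by
  obtain ⟨f, hf, hfxy⟩ := exists_dual_vector'' ℝ (x + y)
  rw [RCLike.ofReal_real_eq_id, id] at hfxy
  have hx := h.norm_add_mul_apply_eq_norm_sq hxy hf hfxy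
  have hy := h.norm_add_mul_apply_eq_norm_sq (h.bjOrth_symm hxy) hf (by rwa [add_comm])
  rw [add_comm y x] at hy
  rw [← hx, ← hy, ← mul_add, ← map_add, hfxy, sq]

theorem parallelogram_law_with_norm (h : IsBJIsotropic X) (u v : X) :
    ‖u + v‖ * ‖u + v‖ + ‖u - v‖ * ‖u - v‖ = 2 * (‖u‖ * ‖u‖ + ‖v‖ * ‖v‖) := by
  obtain ⟨α, hα⟩ := exists_bjOrth_sub_smul u v
  have pyth : ∀ (c : ℝ) {z : X}, BJOrth u z → ‖c • u + z‖ ^ 2 = c ^ 2 * ‖u‖ ^ 2 + ‖z‖ ^ 2 :=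
    fun c z hz => by
      rw [h.norm_add_sq_eq_norm_sq_add_norm_sq (hz.smul_left c), norm_smul, mul_pow,
        Real.norm_eq_abs, sq_abs]
  have h1 := pyth (1 + α) hα
  have h2 := pyth (1 - α) hα.neg_right
  have h3 := pyth α hα
  rw [show (1 + α) • u + (v - α • u) = u + v by module] at h1
  rw [show (1 - α) • u + -(v - α • u) = u - v by module, norm_neg] at h2
  rw [show α • u + (v - α • u) = v by module] at h3
  linear_combination h1 + h2 - 2 * h3

end IsBJIsotropic

theorem inner_eq_zero_of_bjOrth {E : Type*} [NormedAddCommGroup E] [InnerProductSpace ℝ E]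
    {x y : E} (h : BJOrth x y) : inner ℝ x y = 0 := by
  rcases eq_or_ne y 0 with rfl | hy
  · simp
  have hy2 : 0 < ‖y‖ ^ 2 := by positivity
  have hsq : ‖x + (-(inner ℝ x y / ‖y‖ ^ 2)) • y‖ ^ 2 = ‖x‖ ^ 2 - inner ℝ x y ^ 2 / ‖y‖ ^ 2 := by
    rw [norm_add_sq_real, real_inner_smul_right, norm_smul, mul_pow, Real.norm_eq_abs, sq_abs]
    field_simp
    ring
  have hle := pow_le_pow_left₀ (norm_nonneg x) (h (-(inner ℝ x y / ‖y‖ ^ 2))) 2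
  have : inner ℝ x y ^ 2 ≤ 0 := by
    rw [hsq, le_sub_self_iff, div_nonpos_iff] at hle
    rcases hle with ⟨_, h2⟩ | ⟨h1, _⟩ <;> linarith
  exact pow_eq_zero_iff two_ne_zero |>.mp (le_antisymm this (sq_nonneg _))

theorem isBJIsotropic_of_innerProductSpace {E : Type*} [NormedAddCommGroup E]
    [InnerProductSpace ℝ E] : IsBJIsotropic E := by
  intro x z w hxz hxw hzw a b
  have hsq : ∀ v : E, BJOrth x v → ‖a • x + b • v‖ ^ 2 = a ^ 2 * ‖x‖ ^ 2 + b ^ 2 * ‖v‖ ^ 2 :=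
    fun v hv => by
      rw [norm_add_sq_real, real_inner_smul_left, real_inner_smul_right,
        inner_eq_zero_of_bjOrth hv, norm_smul, norm_smul, mul_pow, mul_pow, Real.norm_eq_abs,
        Real.norm_eq_abs, sq_abs, sq_abs]
      ring
  rw [← pow_left_inj₀ (norm_nonneg _) (norm_nonneg _) two_ne_zero, hsq z hxz, hsq w hxw, hzw]

theorem stmt17_general {X : Type*} [NormedAddCommGroup X] [NormedSpace ℝ X] :
    Nonempty (InnerProductSpace ℝ X) ↔
      ∀ x : X, ‖x‖ = 1 → ∀ r : ℝ, 0 < r → IsCPPConst x x r 1 := by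
  constructor
  · rintro ⟨inst⟩ x _ r _
    -- `inst` may carry its own scalar action; only its parallelogram law is used.
    have hpar : ∀ u v : X, ‖u + v‖ * ‖u + v‖ + ‖u - v‖ * ‖u - v‖ =
        2 * (‖u‖ * ‖u‖ + ‖v‖ * ‖v‖) := fun u v => by
      simpa only [sq] using @parallelogram_law_with_norm ℝ X _ _ inst u v
    exact (@isBJIsotropic_of_innerProductSpace X _ (InnerProductSpace.ofNorm ℝ hpar)).isCPPConst x r
  · intro hH
    exact ⟨InnerProductSpace.ofNorm ℝ (isBJIsotropic_of_isCPPConst hH).parallelogram_law_with_norm⟩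

theorem stmt17 {X : Type*} [NormedAddCommGroup X] [NormedSpace ℝ X] [CompleteSpace X]
    (hdim : 2 ≤ Module.rank ℝ X) :
    Nonempty (InnerProductSpace ℝ X) ↔
      ∀ x : X, ‖x‖ = 1 → ∀ r : ℝ, 0 < r → IsCPPConst x x r 1 :=
  stmt17_general
end

section
/- Let X be a real Banach space that is not strictly convex, witnessed by unit vectors y, z and λ₀ > 0 such that the entire segment from y + λ₀z to y − λ₀z lies in the unit sphere. Set k = inf{λ > 0 : ‖y + λz‖ > 1} and x = y + kz. Then ‖x‖ = 1, x is Birkhoff-James orthogonal to z, and ‖x − λz‖ = 1 for all λ ∈ [0, k]. -/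
open Metric

lemma helper18 {X : Type*} [NormedAddCommGroup X] [NormedSpace ℝ X]
    (y z : X) (lam₀ : ℝ) (hlam₀ : 0 < lam₀)
    (hseg : ∀ t : ℝ, |t| ≤ lam₀ → ‖y + t • z‖ = 1) {l : ℝ} (hl : lam₀ ≤ l) :
    1 ≤ ‖y + l • z‖ := by
  have h1 : ‖y + lam₀ • z‖ = 1 := hseg lam₀ (by rw [abs_of_pos hlam₀])
  have h2 : ‖y + (-lam₀) • z‖ = 1 := hseg _ (by rw [abs_neg, abs_of_pos hlam₀])
  obtain ⟨θ, hθ⟩ : ∃ θ : ℝ, θ = (l - lam₀)/(l + lam₀) := ⟨_, rfl⟩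
  have hden : 0 < l + lam₀ := by linarith
  have hθ0 : 0 ≤ θ := hθ ▸ div_nonneg (by linarith) hden.le
  have hθpos : 0 < 1 - θ := by
    rw [hθ, sub_pos, div_lt_one hden]; linarith
  have hc : θ * (-lam₀) + (1-θ) * l = lam₀ := by
    rw [hθ]; field_simp; ring
  have key : θ • (y + (-lam₀) • z) + (1-θ) • (y + l • z) = y + lam₀ • z := by
    match_scalars
    · ring
    · linear_combination hc
  have := norm_add_le (θ • (y + (-lam₀) • z)) ((1-θ) • (y + l • z))
  rw [key, h1, norm_smul, norm_smul, h2] at this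
  rw [Real.norm_eq_abs, Real.norm_eq_abs, abs_of_nonneg hθ0, abs_of_nonneg hθpos.le] at this
  nlinarith [norm_nonneg (y + l • z)]

theorem stmt18 {X : Type*} [NormedAddCommGroup X] [NormedSpace ℝ X] [CompleteSpace X]
    (y z : X) (hy : ‖y‖ = 1) (hz : ‖z‖ = 1) (lam₀ : ℝ) (hlam₀ : 0 < lam₀)
    (hseg : ∀ t : ℝ, |t| ≤ lam₀ → ‖y + t • z‖ = 1) :
    ‖y + (sInf {l : ℝ | 0 < l ∧ 1 < ‖y + l • z‖}) • z‖ = 1 ∧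
    BJOrth (y + (sInf {l : ℝ | 0 < l ∧ 1 < ‖y + l • z‖}) • z) z ∧
    ∀ l : ℝ, 0 ≤ l → l ≤ sInf {l : ℝ | 0 < l ∧ 1 < ‖y + l • z‖} →
      ‖(y + (sInf {l : ℝ | 0 < l ∧ 1 < ‖y + l • z‖}) • z) - l • z‖ = 1 := by
  set S := {l : ℝ | 0 < l ∧ 1 < ‖y + l • z‖} with hS
  set k := sInf S with hk
  -- S is nonempty
  have h3 : (3:ℝ) ∈ S := by
    constructor
    · norm_num
    · have h1 := norm_add_le (y + (3:ℝ) • z) (-y)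
      rw [show y + (3:ℝ) • z + -y = (3:ℝ) • z by abel, norm_neg, norm_smul, hy, hz,
        Real.norm_ofNat, mul_one] at h1
      linarith
  have hSne : S.Nonempty := ⟨3, h3⟩
  have hbdd : BddBelow S := ⟨0, fun l hl => hl.1.le⟩
  -- k ≥ lam₀
  have hklam : lam₀ ≤ k := by
    apply le_csInf hSne
    intro l hl
    by_contra h
    push_neg at h
    have : ‖y + l • z‖ = 1 := hseg l (by rw [abs_of_pos hl.1]; exact h.le)
    linarith [hl.2]
  have hkpos : 0 < k := lt_of_lt_of_le hlam₀ hklam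
  -- below k, norm ≤ 1
  have hle1 : ∀ l : ℝ, 0 ≤ l → l < k → ‖y + l • z‖ ≤ 1 := by
    intro l hl0 hlk
    rcases eq_or_lt_of_le hl0 with h0 | h0
    · rw [← h0]; simp [hy]
    by_contra h
    push_neg at h
    exact absurd (csInf_le hbdd ⟨h0, h⟩) (not_le.mpr hlk)
  -- for l ≥ lam₀, norm ≥ 1
  have hge1 : ∀ l : ℝ, lam₀ ≤ l → 1 ≤ ‖y + l • z‖ :=
    fun l hl => helper18 y z lam₀ hlam₀ hseg hl
  -- for l ≤ -lam₀, norm ≥ 1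
  have hge1' : ∀ l : ℝ, l ≤ -lam₀ → 1 ≤ ‖y + l • z‖ := by
    intro l hl
    have hseg' : ∀ t : ℝ, |t| ≤ lam₀ → ‖y + t • (-z)‖ = 1 := by
      intro t ht
      rw [show t • (-z) = (-t) • z by module]
      exact hseg (-t) (by rwa [abs_neg])
    have := helper18 y (-z) lam₀ hlam₀ hseg' (show lam₀ ≤ -l by linarith)
    rwa [show (-l) • (-z) = l • z by module] at this
  -- norm = 1 on [0, k)
  have heq : ∀ l : ℝ, 0 ≤ l → l < k → ‖y + l • z‖ = 1 := by
    intro l hl0 hlk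
    rcases le_or_gt l lam₀ with h | h
    · exact hseg l (by rw [abs_of_nonneg hl0]; exact h)
    · exact le_antisymm (hle1 l hl0 hlk) (hge1 l h.le)
  -- norm at k
  have fk : ‖y + k • z‖ = 1 := by
    refine le_antisymm ?_ (hge1 k hklam)
    refine le_of_forall_pos_le_add fun ε hε => ?_
    obtain ⟨δ, hδ0, hδε, hδl⟩ : ∃ δ : ℝ, 0 < δ ∧ δ ≤ ε ∧ δ ≤ lam₀ :=
      ⟨min ε lam₀, lt_min hε hlam₀, min_le_left _ _, min_le_right _ _⟩
    have hsplit : y + k • z = (y + (k - δ) • z) + δ • z := by module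
    calc ‖y + k • z‖ ≤ ‖y + (k - δ) • z‖ + ‖δ • z‖ := by rw [hsplit]; exact norm_add_le _ _
      _ = 1 + δ := by
          rw [heq (k - δ) (by linarith) (by linarith), norm_smul, Real.norm_eq_abs,
            abs_of_pos hδ0, hz, mul_one]
      _ ≤ 1 + ε := by linarith
  -- norm = 1 on [0, k]
  have heqc : ∀ l : ℝ, 0 ≤ l → l ≤ k → ‖y + l • z‖ = 1 := by
    intro l hl0 hlk
    rcases eq_or_lt_of_le hlk with h | h
    · rw [h]; exact fk
    · exact heq l hl0 h
  refine ⟨fk, ?_, ?_⟩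
  · -- BJ orthogonality
    intro t
    rw [fk, show y + k • z + t • z = y + (k + t) • z by module]
    rcases le_or_gt lam₀ (k + t) with h | h
    · exact hge1 _ h
    rcases le_or_gt (k + t) (-lam₀) with h' | h'
    · exact hge1' _ h'
    · exact le_of_eq (hseg (k + t) (abs_le.mpr ⟨h'.le, h.le⟩)).symm
  · -- the segment
    intro l hl0 hlk
    rw [show y + k • z - l • z = y + (k - l) • z by module]
    exact heqc (k - l) (by linarith) (by linarith)
end
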